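/- arXiv:1304.0285 — 8 statements merged into one kernel-verified Lean document; each statement's English description precedes it below -/
import Mathlib

section
/- If G is a k-degenerate simple graph with maximum degree Δ and k ≤ Δ, then the strong chromatic index of G satisfies χ'_s(G) ≤ (4k − 2)·Δ − 2k² + 1. -/
/-- A strong edge coloring: any two distinct edges that are adjacent or both
adjacent to a common third edge receive distinct colors. -/
def SimpleGraph.IsStrongEdgeColoring {V : Type*} (G : SimpleGraph V)
    (C : Sym2 V → ℕ) : Prop :=
  ∀ e ∈ G.edgeSet, ∀ f ∈ G.edgeSet, e ≠ f →
    ((∃ v, v ∈ e ∧ v ∈ f) ∨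
      ∃ g ∈ G.edgeSet, (∃ v, v ∈ e ∧ v ∈ g) ∧ ∃ w, w ∈ g ∧ w ∈ f) →
    C e ≠ C f

/-- The strong chromatic index: the least number of colors in a strong edge
coloring of `G`. -/
noncomputable def SimpleGraph.strongChromaticIndex {V : Type*}
    (G : SimpleGraph V) : ℕ :=
  sInf {n | ∃ C : Sym2 V → ℕ, (∀ e ∈ G.edgeSet, C e < n) ∧
    G.IsStrongEdgeColoring C}

/-- A graph is `k`-degenerate if every (induced) subgraph on a nonempty vertex
set has a vertex of degree at most `k` in that subgraph. -/
def SimpleGraph.Degenerate {V : Type*} [Fintype V] (G : SimpleGraph V)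
    [DecidableRel G.Adj] (k : ℕ) : Prop :=
  ∀ S : Finset V, S.Nonempty → ∃ v ∈ S, (S.filter (G.Adj v)).card ≤ k


open Finset

private lemma order_on {V : Type*} [DecidableEq V] [Fintype V] (G : SimpleGraph V)
    [DecidableRel G.Adj] (k : ℕ)
    (hdeg : ∀ S : Finset V, S.Nonempty → ∃ v ∈ S, (S.filter (G.Adj v)).card ≤ k) :
    ∀ S : Finset V, ∃ pos : V → ℕ, Set.InjOn pos S ∧ (∀ v ∈ S, pos v < S.card) ∧
      ∀ v ∈ S, ((S.filter (fun z => G.Adj v z ∧ pos v < pos z)).card ≤ k) := by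
  suffices H : ∀ n, ∀ S : Finset V, S.card ≤ n → ∃ pos : V → ℕ, Set.InjOn pos S ∧
      (∀ v ∈ S, pos v < S.card) ∧
      ∀ v ∈ S, ((S.filter (fun z => G.Adj v z ∧ pos v < pos z)).card ≤ k) by
    exact fun S => H S.card S le_rfl
  intro n
  induction n with
  | zero =>
    intro S hS
    have : S = ∅ := Finset.card_eq_zero.1 (Nat.le_zero.1 hS)
    subst this
    exact ⟨fun _ => 0, by simp [Set.InjOn], by simp, by simp⟩
  | succ n ih =>
    intro S hS
    rcases Finset.eq_empty_or_nonempty S with rfl | hne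
    · exact ⟨fun _ => 0, by simp [Set.InjOn], by simp, by simp⟩
    obtain ⟨v₀, hv₀S, hv₀k⟩ := hdeg S hne
    have hcard : (S.erase v₀).card ≤ n := by
      rw [Finset.card_erase_of_mem hv₀S]
      omega
    obtain ⟨pos', hinj', hlt', hfwd'⟩ := ih (S.erase v₀) hcard
    refine ⟨fun w => if w = v₀ then 0 else pos' w + 1, ?_, ?_, ?_⟩
    · intro x hx y hy hxy
      dsimp only at hxy
      by_cases hx0 : x = v₀ <;> by_cases hy0 : y = v₀
      · rw [hx0, hy0]
      · rw [if_pos hx0, if_neg hy0] at hxy; omega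
      · rw [if_neg hx0, if_pos hy0] at hxy; omega
      · rw [if_neg hx0, if_neg hy0] at hxy
        exact hinj'
          (by simp only [Finset.coe_erase, Set.mem_diff, Set.mem_singleton_iff]; exact ⟨hx, hx0⟩)
          (by simp only [Finset.coe_erase, Set.mem_diff, Set.mem_singleton_iff]; exact ⟨hy, hy0⟩)
          (by omega)
    · intro w hw
      by_cases hw0 : w = v₀
      · simp only [hw0, if_pos rfl]
        exact Finset.card_pos.2 hne
      · simp only [if_neg hw0]
        have := hlt' w (Finset.mem_erase.2 ⟨hw0, hw⟩)
        rw [Finset.card_erase_of_mem hv₀S] at this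
        have : 0 < S.card := Finset.card_pos.2 hne
        omega
    · intro w hw
      by_cases hw0 : w = v₀
      · subst hw0
        refine le_trans (Finset.card_le_card ?_) hv₀k
        intro z hz
        simp only [Finset.mem_filter] at hz ⊢
        exact ⟨hz.1, hz.2.1⟩
      · refine le_trans (Finset.card_le_card ?_) (hfwd' w (Finset.mem_erase.2 ⟨hw0, hw⟩))
        intro z hz
        simp only [Finset.mem_filter, Finset.mem_erase] at hz ⊢
        obtain ⟨hzS, hadj, hlt⟩ := hz
        have hz0 : z ≠ v₀ := by
          intro h
          subst h
          rw [if_pos rfl, if_neg hw0] at hlt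
          omega
        rw [if_neg hw0, if_neg hz0] at hlt
        exact ⟨⟨hz0, hzS⟩, hadj, by omega⟩

private noncomputable def greedyAux {V : Type*} (P : Sym2 V → Sym2 V → Prop)
    (key : Sym2 V → ℕ) : ℕ → Sym2 V → ℕ
  | n, e =>
    sInf {c : ℕ | ∀ f, P e f → ∀ _h : key f < n, greedyAux P key (key f) f ≠ c}
  termination_by n _ => n
  decreasing_by exact _h

private noncomputable def sMax {V : Type*} (pos : V → ℕ) : Sym2 V → ℕ :=
  Sym2.lift ⟨fun x y => max (pos x) (pos y), fun _ _ => max_comm _ _⟩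

private noncomputable def sMin {V : Type*} (pos : V → ℕ) : Sym2 V → ℕ :=
  Sym2.lift ⟨fun x y => min (pos x) (pos y), fun _ _ => min_comm _ _⟩

@[simp] private lemma sMax_mk {V : Type*} (pos : V → ℕ) (x y : V) :
    sMax pos s(x, y) = max (pos x) (pos y) := rfl

@[simp] private lemma sMin_mk {V : Type*} (pos : V → ℕ) (x y : V) :
    sMin pos s(x, y) = min (pos x) (pos y) := rfl

private noncomputable def ekey {V : Type*} (pos : V → ℕ) (n : ℕ) (e : Sym2 V) : ℕ :=
  (n - 1 - sMax pos e) * n + sMin pos e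

private lemma key_lt_elim {Mf mf Me me n : ℕ} (hMe : Me < n) (hme : me < n) (hmf : mf < n)
    (h : (n - 1 - Mf) * n + mf < (n - 1 - Me) * n + me) :
    Me < Mf ∨ (Mf = Me ∧ mf < me) := by
  rcases lt_trichotomy Mf Me with hlt | heq | hgt
  · exfalso
    have h2 : ((n - 1 - Me) + 1) * n ≤ (n - 1 - Mf) * n :=
      Nat.mul_le_mul_right n (by omega)
    have h3 : (n - 1 - Me) * n + n ≤ (n - 1 - Mf) * n := by
      rw [Nat.succ_mul] at h2; omega
    omega
  · subst heq
    exact Or.inr ⟨rfl, by omega⟩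
  · exact Or.inl hgt

private lemma key_eq_elim {A B C D n : ℕ} (hB : B < n) (hD : D < n)
    (h : A * n + B = C * n + D) : A = C ∧ B = D := by
  have h1 : B = D := by
    have := congrArg (· % n) h
    simpa [Nat.mul_add_mod', Nat.mod_eq_of_lt hB, Nat.mod_eq_of_lt hD] using this
  subst h1
  refine ⟨?_, rfl⟩
  have hn : 0 < n := lt_of_le_of_lt (Nat.zero_le _) hB
  have : A * n = C * n := by omega
  exact Nat.eq_of_mul_eq_mul_right hn this

private lemma greedyAux_mem {V : Type*} [Fintype V] [DecidableEq V]
    (P : Sym2 V → Sym2 V → Prop) (key : Sym2 V → ℕ) (n : ℕ) (e : Sym2 V) :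
    ∀ f, P e f → key f < n → greedyAux P key (key f) f ≠ greedyAux P key n e := by
  classical
  have hset : {c : ℕ | ∀ f, P e f → ∀ _h : key f < n, greedyAux P key (key f) f ≠ c}.Nonempty := by
    set T : Finset ℕ := (Finset.univ.filter (fun f : Sym2 V => P e f ∧ key f < n)).image
      (fun f => greedyAux P key (key f) f) with hT
    refine ⟨T.sup id + 1, ?_⟩
    intro f hPf hkf hc
    have hmem : greedyAux P key (key f) f ∈ T := by
      rw [hT]
      exact Finset.mem_image.2 ⟨f, Finset.mem_filter.2 ⟨Finset.mem_univ _, hPf, hkf⟩, rfl⟩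
    have := Finset.le_sup (f := id) hmem
    simp only [id] at this
    omega
  have : greedyAux P key n e ∈
      {c : ℕ | ∀ f, P e f → ∀ _h : key f < n, greedyAux P key (key f) f ≠ c} := by
    rw [greedyAux]
    exact Nat.sInf_mem hset
  exact fun f hPf hkf => this f hPf hkf

private lemma greedyAux_le {V : Type*} [DecidableEq V]
    (P : Sym2 V → Sym2 V → Prop) (key : Sym2 V → ℕ) (n : ℕ) (e : Sym2 V)
    (D : Finset (Sym2 V)) (hDfull : ∀ f, P e f → key f < n → f ∈ D) :
    greedyAux P key n e ≤ D.card := by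
  classical
  set T : Finset ℕ := D.image (fun f => greedyAux P key (key f) f) with hT
  have hTcard : T.card ≤ D.card := Finset.card_image_le
  have : ∃ c, c ≤ D.card ∧ c ∉ T := by
    by_contra hcon
    push_neg at hcon
    have hsub : Finset.range (D.card + 1) ⊆ T := by
      intro c hc
      exact hcon c (by simpa using Nat.lt_succ_iff.1 (Finset.mem_range.1 hc))
    have := Finset.card_le_card hsub
    simp only [Finset.card_range] at this
    omega
  obtain ⟨c, hcle, hcT⟩ := this
  have hcmem : c ∈ {c : ℕ | ∀ f, P e f → ∀ _h : key f < n, greedyAux P key (key f) f ≠ c} := by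
    intro f hPf hkf hc
    exact hcT (hT ▸ Finset.mem_image.2 ⟨f, hDfull f hPf hkf, hc ▸ rfl⟩)
  calc greedyAux P key n e ≤ c := by rw [greedyAux]; exact Nat.sInf_le hcmem
    _ ≤ D.card := hcle

private lemma card_le_of_other {V : Type*} [DecidableEq V] (D : Finset (Sym2 V)) (x : V)
    (T : Finset V) (hmem : ∀ f ∈ D, x ∈ f)
    (hoth : ∀ w : V, s(x, w) ∈ D → w ∈ T) :
    D.card ≤ T.card := by
  classical
  refine Finset.card_le_card_of_injOn
    (fun f => if h : x ∈ f then Sym2.Mem.other h else x) ?_ ?_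
  · intro f hf
    have h := hmem f hf
    simp only [dif_pos h]
    apply hoth
    rw [Sym2.other_spec h]
    exact hf
  · intro f₁ h₁ f₂ h₂ hEq
    simp only [Finset.mem_coe] at h₁ h₂
    have hx₁ := hmem f₁ h₁
    have hx₂ := hmem f₂ h₂
    simp only [dif_pos hx₁, dif_pos hx₂] at hEq
    rw [← Sym2.other_spec hx₁, ← Sym2.other_spec hx₂, hEq]

private lemma adj_of_two_mem {V : Type*} {G : SimpleGraph V} {g : Sym2 V}
    (hg : g ∈ G.edgeSet) {z w : V} (hz : z ∈ g) (hw : w ∈ g) (hzw : z ≠ w) :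
    G.Adj z w := by
  induction g using Sym2.ind with
  | _ a b =>
    rw [SimpleGraph.mem_edgeSet] at hg
    rw [Sym2.mem_iff] at hz hw
    rcases hz with rfl | rfl <;> rcases hw with rfl | rfl
    · exact absurd rfl hzw
    · exact hg
    · exact hg.symm
    · exact absurd rfl hzw
section CountBound
open Finset

private lemma sum_union_le {α : Type*} [DecidableEq α] (s t : Finset α) (f : α → ℕ) :
    ∑ x ∈ s ∪ t, f x ≤ ∑ x ∈ s, f x + ∑ x ∈ t, f x := by
  have h := Finset.sum_union_inter (s₁ := s) (s₂ := t) (f := f)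
  omega

variable {V : Type*} [Fintype V] [DecidableEq V] (G : SimpleGraph V) [DecidableRel G.Adj]
  (k : ℕ) (pos : V → ℕ)

set_option maxHeartbeats 2000000 in
private lemma count_bound (hpos : Function.Injective pos)
    (hfwd : ∀ x : V, ((univ.filter (fun z => G.Adj x z ∧ pos x < pos z)).card ≤ k))
    (hk : k ≤ G.maxDegree) (u v : V) (huv : G.Adj u v) (hpq : pos u < pos v)
    (D : Finset (Sym2 V))
    (hD : ∀ f ∈ D, f ∈ G.edgeSet ∧ f ≠ s(u, v) ∧
      (∃ x, x ∈ f ∧ (x = u ∨ x = v ∨ G.Adj u x ∨ G.Adj v x)) ∧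
      (pos v < sMax pos f ∨ (sMax pos f = pos v ∧ sMin pos f < pos u))) :
    D.card ≤ (4 * k - 2) * G.maxDegree - 2 * k ^ 2 := by
  classical
  set Δ := G.maxDegree with hΔdef
  set A : Finset V := univ.filter (fun z => G.Adj v z ∧ pos v < pos z) with hA
  set A' : Finset V := univ.filter (fun z => G.Adj u z ∧ pos v < pos z) with hA'
  set Wv : Finset V := univ.filter (fun z => G.Adj v z ∧ pos z < pos v ∧ z ≠ u) with hWv
  set Bu : Finset V := univ.filter (fun z => G.Adj u z ∧ pos u < pos z ∧ pos z < pos v) with hBu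
  set Cu : Finset V := univ.filter (fun z => G.Adj u z ∧ pos z < pos u) with hCu
  -- cardinal constraints
  have F5 : 1 ≤ k := by
    refine le_trans ?_ (hfwd u)
    rw [Nat.succ_le_iff, Finset.card_pos]
    exact ⟨v, by simp [huv, hpq]⟩
  have hΔ1 : 1 ≤ Δ := le_trans F5 hk
  have F1 : A.card ≤ k := hfwd v
  have F2 : A'.card + Bu.card + 1 ≤ k := by
    have hd1 : Disjoint A' Bu := by
      rw [Finset.disjoint_left]
      intro z hz1 hz2
      rw [hA', Finset.mem_filter] at hz1
      rw [hBu, Finset.mem_filter] at hz2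
      omega
    have hd2 : Disjoint (A' ∪ Bu) {v} := by
      rw [Finset.disjoint_right]
      intro z hz1 hz2
      rw [Finset.mem_singleton] at hz1
      subst hz1
      rw [Finset.mem_union, hA', hBu, Finset.mem_filter, Finset.mem_filter] at hz2
      omega
    have hsub : (A' ∪ Bu ∪ {v}) ⊆ univ.filter (fun z => G.Adj u z ∧ pos u < pos z) := by
      intro z hz
      simp only [Finset.mem_union, Finset.mem_singleton, hA', hBu, Finset.mem_filter] at hz
      rcases hz with (⟨_, h1, h2⟩ | ⟨_, h1, h2, _⟩) | rfl
      · exact Finset.mem_filter.2 ⟨Finset.mem_univ _, h1, by omega⟩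
      · exact Finset.mem_filter.2 ⟨Finset.mem_univ _, h1, h2⟩
      · exact Finset.mem_filter.2 ⟨Finset.mem_univ _, huv, hpq⟩
    calc A'.card + Bu.card + 1
        = (A' ∪ Bu ∪ {v}).card := by
          rw [Finset.card_union_of_disjoint hd2, Finset.card_union_of_disjoint hd1,
            Finset.card_singleton]
      _ ≤ _ := Finset.card_le_card hsub
      _ ≤ k := hfwd u
  have F3 : A'.card + Bu.card + Cu.card + 1 ≤ Δ := by
    have hd1 : Disjoint A' Bu := by
      rw [Finset.disjoint_left]
      intro z hz1 hz2
      rw [hA', Finset.mem_filter] at hz1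
      rw [hBu, Finset.mem_filter] at hz2
      omega
    have hd2 : Disjoint (A' ∪ Bu) Cu := by
      rw [Finset.disjoint_left]
      intro z hz1 hz2
      rw [Finset.mem_union, hA', hBu, Finset.mem_filter, Finset.mem_filter] at hz1
      rw [hCu, Finset.mem_filter] at hz2
      omega
    have hd3 : Disjoint (A' ∪ Bu ∪ Cu) {v} := by
      rw [Finset.disjoint_right]
      intro z hz1 hz2
      rw [Finset.mem_singleton] at hz1
      subst hz1
      rw [Finset.mem_union, Finset.mem_union, hA', hBu, hCu, Finset.mem_filter,
        Finset.mem_filter, Finset.mem_filter] at hz2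
      omega
    have hsub : (A' ∪ Bu ∪ Cu ∪ {v}) ⊆ G.neighborFinset u := by
      intro z hz
      simp only [Finset.mem_union, Finset.mem_singleton, hA', hBu, hCu,
        Finset.mem_filter] at hz
      rw [SimpleGraph.mem_neighborFinset]
      rcases hz with ((⟨_, h1, _⟩ | ⟨_, h1, _⟩) | ⟨_, h1, _⟩) | rfl
      · exact h1
      · exact h1
      · exact h1
      · exact huv
    calc A'.card + Bu.card + Cu.card + 1
        = (A' ∪ Bu ∪ Cu ∪ {v}).card := by
          rw [Finset.card_union_of_disjoint hd3, Finset.card_union_of_disjoint hd2,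
            Finset.card_union_of_disjoint hd1, Finset.card_singleton]
      _ ≤ _ := Finset.card_le_card hsub
      _ ≤ Δ := G.degree_le_maxDegree u
  have F4 : A.card + Wv.card + 1 ≤ Δ := by
    have hd1 : Disjoint A Wv := by
      rw [Finset.disjoint_left]
      intro z hz1 hz2
      rw [hA, Finset.mem_filter] at hz1
      rw [hWv, Finset.mem_filter] at hz2
      omega
    have hd2 : Disjoint (A ∪ Wv) {u} := by
      rw [Finset.disjoint_right]
      intro z hz1 hz2
      rw [Finset.mem_singleton] at hz1
      subst hz1
      rw [Finset.mem_union, hA, hWv, Finset.mem_filter, Finset.mem_filter] at hz2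
      rcases hz2 with ⟨_, _, h2⟩ | ⟨_, _, _, h3⟩
      · omega
      · exact h3 rfl
    have hsub : (A ∪ Wv ∪ {u}) ⊆ G.neighborFinset v := by
      intro z hz
      simp only [Finset.mem_union, Finset.mem_singleton, hA, hWv, Finset.mem_filter] at hz
      rw [SimpleGraph.mem_neighborFinset]
      rcases hz with (⟨_, h1, _⟩ | ⟨_, h1, _⟩) | rfl
      · exact h1
      · exact h1
      · exact huv.symm
    calc A.card + Wv.card + 1
        = (A ∪ Wv ∪ {u}).card := by
          rw [Finset.card_union_of_disjoint hd2, Finset.card_union_of_disjoint hd1,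
            Finset.card_singleton]
      _ ≤ _ := Finset.card_le_card hsub
      _ ≤ Δ := G.degree_le_maxDegree v
  -- partition of D
  set D1 : Finset (Sym2 V) := D.filter (fun f => v ∈ f) with hD1
  set D2 : Finset (Sym2 V) := D.filter (fun f => u ∈ f ∧ v ∉ f) with hD2
  set D3 : Finset (Sym2 V) := D.filter
    (fun f => u ∉ f ∧ v ∉ f ∧ ∃ z, z ∈ f ∧ (G.Adj u z ∨ G.Adj v z) ∧ pos v < pos z) with hD3
  set D4 : Finset (Sym2 V) := D.filter
    (fun f => u ∉ f ∧ v ∉ f ∧ ∃ z, z ∈ f ∧ (G.Adj u z ∨ G.Adj v z) ∧ pos z < pos v) with hD4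
  have hcover : D ⊆ D1 ∪ D2 ∪ D3 ∪ D4 := by
    intro f hf
    obtain ⟨hfe, hfne, ⟨x, hxf, hxw⟩, _⟩ := hD f hf
    simp only [Finset.mem_union, hD1, hD2, hD3, hD4, Finset.mem_filter]
    by_cases hvf : v ∈ f
    · exact Or.inl (Or.inl (Or.inl ⟨hf, hvf⟩))
    by_cases huf : u ∈ f
    · exact Or.inl (Or.inl (Or.inr ⟨hf, huf, hvf⟩))
    have hxu : x ≠ u := fun h => huf (h ▸ hxf)
    have hxv : x ≠ v := fun h => hvf (h ▸ hxf)
    have hadj : G.Adj u x ∨ G.Adj v x := by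
      rcases hxw with rfl | rfl | h | h
      · exact absurd rfl hxu
      · exact absurd rfl hxv
      · exact Or.inl h
      · exact Or.inr h
    have hne : pos x ≠ pos v := fun h => hxv (hpos h)
    rcases lt_or_gt_of_ne hne with hlt | hgt
    · exact Or.inr ⟨hf, huf, hvf, x, hxf, hadj, hlt⟩
    · exact Or.inl (Or.inr ⟨hf, huf, hvf, x, hxf, hadj, hgt⟩)
  have hcards : D.card ≤ D1.card + D2.card + D3.card + D4.card := by
    calc D.card ≤ (D1 ∪ D2 ∪ D3 ∪ D4).card := Finset.card_le_card hcover
      _ ≤ (D1 ∪ D2 ∪ D3).card + D4.card := Finset.card_union_le _ _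
      _ ≤ (D1 ∪ D2).card + D3.card + D4.card := by
          have := Finset.card_union_le (D1 ∪ D2) D3; omega
      _ ≤ D1.card + D2.card + D3.card + D4.card := by
          have := Finset.card_union_le D1 D2; omega
  -- bound on D1
  have B1 : D1.card ≤ A.card + Wv.card := by
    refine le_trans (card_le_of_other D1 v (A ∪ Wv) ?_ ?_) (Finset.card_union_le _ _)
    · intro f hf
      exact (Finset.mem_filter.1 hf).2
    · intro w hw
      have hfD : s(v, w) ∈ D := (Finset.mem_filter.1 hw).1
      obtain ⟨hfe, hfne, _, hord⟩ := hD _ hfD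
      rw [SimpleGraph.mem_edgeSet] at hfe
      have hwv : w ≠ v := fun h => G.irrefl (h ▸ hfe)
      have hwu : w ≠ u := by
        intro h
        subst h
        exact hfne (Sym2.eq_swap)
      simp only [sMax_mk, sMin_mk] at hord
      simp only [Finset.mem_union, hA, hWv, Finset.mem_filter, Finset.mem_univ, true_and]
      have hpwv : pos w ≠ pos v := fun h => hwv (hpos h)
      rcases hord with h | ⟨h1, h2⟩
      · exact Or.inl ⟨hfe, by omega⟩
      · exact Or.inr ⟨hfe, by omega, hwu⟩
  -- bound on D2
  have B2 : D2.card ≤ A'.card := by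
    refine card_le_of_other D2 u A' ?_ ?_
    · intro f hf
      exact (Finset.mem_filter.1 hf).2.1
    · intro w hw
      have hfD : s(u, w) ∈ D := (Finset.mem_filter.1 hw).1
      have hvf : v ∉ s(u, w) := (Finset.mem_filter.1 hw).2.2
      obtain ⟨hfe, hfne, _, hord⟩ := hD _ hfD
      rw [SimpleGraph.mem_edgeSet] at hfe
      have hwv : w ≠ v := fun h => hvf (by rw [h]; simp [Sym2.mem_iff])
      have hpwv : pos w ≠ pos v := fun h => hwv (hpos h)
      simp only [sMax_mk, sMin_mk] at hord
      simp only [hA', Finset.mem_filter, Finset.mem_univ, true_and]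
      exact ⟨hfe, by omega⟩
  -- bound on D3
  have B3 : D3.card ≤ (A.card + A'.card) * (Δ - 1) := by
    have hsub : D3 ⊆ (A ∪ A').biUnion
        (fun z => D.filter (fun f => z ∈ f ∧ u ∉ f ∧ v ∉ f)) := by
      intro f hf
      rw [hD3, Finset.mem_filter] at hf
      obtain ⟨hfD, huf, hvf, z, hzf, hadj, hzq⟩ := hf
      refine Finset.mem_biUnion.2 ⟨z, ?_, Finset.mem_filter.2 ⟨hfD, hzf, huf, hvf⟩⟩
      simp only [Finset.mem_union, hA, hA', Finset.mem_filter, Finset.mem_univ, true_and]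
      rcases hadj with h | h
      · exact Or.inr ⟨h, hzq⟩
      · exact Or.inl ⟨h, hzq⟩
    have hper : ∀ z ∈ A ∪ A',
        (D.filter (fun f => z ∈ f ∧ u ∉ f ∧ v ∉ f)).card ≤ Δ - 1 := by
      intro z hz
      have hadj : G.Adj v z ∨ G.Adj u z := by
        simp only [Finset.mem_union, hA, hA', Finset.mem_filter, Finset.mem_univ,
          true_and] at hz
        rcases hz with ⟨h, _⟩ | ⟨h, _⟩
        · exact Or.inl h
        · exact Or.inr h
      rcases hadj with hvz | huz
      · refine le_trans (card_le_of_other _ z ((G.neighborFinset z).erase v) ?_ ?_) ?_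
        · intro f hf
          exact (Finset.mem_filter.1 hf).2.1
        · intro w hw
          rw [Finset.mem_filter] at hw
          obtain ⟨hfD, _, huf, hvf⟩ := hw
          obtain ⟨hfe, _, _, _⟩ := hD _ hfD
          rw [SimpleGraph.mem_edgeSet] at hfe
          have hwv : w ≠ v := fun h => hvf (by rw [h]; simp [Sym2.mem_iff])
          exact Finset.mem_erase.2 ⟨hwv, (SimpleGraph.mem_neighborFinset _ _ _).2 hfe⟩
        · rw [Finset.card_erase_of_mem ((SimpleGraph.mem_neighborFinset _ _ _).2 hvz.symm)]
          exact Nat.sub_le_sub_right (G.degree_le_maxDegree z) 1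
      · refine le_trans (card_le_of_other _ z ((G.neighborFinset z).erase u) ?_ ?_) ?_
        · intro f hf
          exact (Finset.mem_filter.1 hf).2.1
        · intro w hw
          rw [Finset.mem_filter] at hw
          obtain ⟨hfD, _, huf, hvf⟩ := hw
          obtain ⟨hfe, _, _, _⟩ := hD _ hfD
          rw [SimpleGraph.mem_edgeSet] at hfe
          have hwu : w ≠ u := fun h => huf (by rw [h]; simp [Sym2.mem_iff])
          exact Finset.mem_erase.2 ⟨hwu, (SimpleGraph.mem_neighborFinset _ _ _).2 hfe⟩
        · rw [Finset.card_erase_of_mem ((SimpleGraph.mem_neighborFinset _ _ _).2 huz.symm)]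
          exact Nat.sub_le_sub_right (G.degree_le_maxDegree z) 1
    calc D3.card ≤ ((A ∪ A').biUnion
          (fun z => D.filter (fun f => z ∈ f ∧ u ∉ f ∧ v ∉ f))).card :=
        Finset.card_le_card hsub
      _ ≤ ∑ z ∈ A ∪ A', (D.filter (fun f => z ∈ f ∧ u ∉ f ∧ v ∉ f)).card :=
        Finset.card_biUnion_le
      _ ≤ (A ∪ A').card * (Δ - 1) := by
          have := Finset.sum_le_card_nsmul (A ∪ A')
            (fun z => (D.filter (fun f => z ∈ f ∧ u ∉ f ∧ v ∉ f)).card) (Δ - 1) hper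
          simpa [smul_eq_mul] using this
      _ ≤ (A.card + A'.card) * (Δ - 1) :=
        Nat.mul_le_mul_right _ (Finset.card_union_le _ _)
  -- bound on D4
  have B4 : D4.card ≤ Wv.card * (k - 1) + (Cu.card * (k - 1) + Bu.card * k) := by
    have hsub : D4 ⊆ (Wv ∪ (Cu ∪ Bu)).biUnion
        (fun x => D.filter (fun f => x ∈ f ∧ u ∉ f ∧ v ∉ f)) := by
      intro f hf
      rw [hD4, Finset.mem_filter] at hf
      obtain ⟨hfD, huf, hvf, z, hzf, hadj, hzq⟩ := hf
      refine Finset.mem_biUnion.2 ⟨z, ?_, Finset.mem_filter.2 ⟨hfD, hzf, huf, hvf⟩⟩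
      have hzu : z ≠ u := fun h => huf (h ▸ hzf)
      simp only [Finset.mem_union, hWv, hCu, hBu, Finset.mem_filter, Finset.mem_univ,
        true_and]
      rcases hadj with h | h
      · have hzpu : pos z ≠ pos u := fun hh => hzu (hpos hh)
        rcases lt_or_gt_of_ne hzpu with hlt | hgt
        · exact Or.inr (Or.inl ⟨h, hlt⟩)
        · exact Or.inr (Or.inr ⟨h, hgt, hzq⟩)
      · exact Or.inl ⟨h, hzq, hzu⟩
    have hperW : ∀ x ∈ Wv,
        (D.filter (fun f => x ∈ f ∧ u ∉ f ∧ v ∉ f)).card ≤ k - 1 := by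
      intro x hx
      rw [hWv, Finset.mem_filter] at hx
      obtain ⟨_, hvx, hxq, hxu⟩ := hx
      refine le_trans (card_le_of_other _ x
        ((univ.filter (fun z => G.Adj x z ∧ pos x < pos z)).erase v) ?_ ?_) ?_
      · intro f hf
        exact (Finset.mem_filter.1 hf).2.1
      · intro w hw
        rw [Finset.mem_filter] at hw
        obtain ⟨hfD, _, huf, hvf⟩ := hw
        obtain ⟨hfe, _, _, hord⟩ := hD _ hfD
        rw [SimpleGraph.mem_edgeSet] at hfe
        have hwv : w ≠ v := fun h => hvf (by rw [h]; simp [Sym2.mem_iff])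
        have hxv : x ≠ v := G.ne_of_adj hvx.symm
        have hpxv : pos x ≠ pos v := fun h => hxv (hpos h)
        have hpwv : pos w ≠ pos v := fun h => hwv (hpos h)
        simp only [sMax_mk, sMin_mk] at hord
        have hwq : pos v < pos w := by omega
        exact Finset.mem_erase.2 ⟨hwv, Finset.mem_filter.2
          ⟨Finset.mem_univ _, hfe, by omega⟩⟩
      · rw [Finset.card_erase_of_mem (Finset.mem_filter.2
          ⟨Finset.mem_univ _, hvx.symm, hxq⟩)]
        exact Nat.sub_le_sub_right (hfwd x) 1
    have hperC : ∀ x ∈ Cu,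
        (D.filter (fun f => x ∈ f ∧ u ∉ f ∧ v ∉ f)).card ≤ k - 1 := by
      intro x hx
      rw [hCu, Finset.mem_filter] at hx
      obtain ⟨_, hux, hxp⟩ := hx
      refine le_trans (card_le_of_other _ x
        ((univ.filter (fun z => G.Adj x z ∧ pos x < pos z)).erase u) ?_ ?_) ?_
      · intro f hf
        exact (Finset.mem_filter.1 hf).2.1
      · intro w hw
        rw [Finset.mem_filter] at hw
        obtain ⟨hfD, _, huf, hvf⟩ := hw
        obtain ⟨hfe, _, _, hord⟩ := hD _ hfD
        rw [SimpleGraph.mem_edgeSet] at hfe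
        have hwu : w ≠ u := fun h => huf (by rw [h]; simp [Sym2.mem_iff])
        have hwv : w ≠ v := fun h => hvf (by rw [h]; simp [Sym2.mem_iff])
        have hpwv : pos w ≠ pos v := fun h => hwv (hpos h)
        simp only [sMax_mk, sMin_mk] at hord
        exact Finset.mem_erase.2 ⟨hwu, Finset.mem_filter.2
          ⟨Finset.mem_univ _, hfe, by omega⟩⟩
      · rw [Finset.card_erase_of_mem (Finset.mem_filter.2
          ⟨Finset.mem_univ _, hux.symm, by omega⟩)]
        exact Nat.sub_le_sub_right (hfwd x) 1
    have hperB : ∀ x ∈ Bu,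
        (D.filter (fun f => x ∈ f ∧ u ∉ f ∧ v ∉ f)).card ≤ k := by
      intro x hx
      rw [hBu, Finset.mem_filter] at hx
      obtain ⟨_, hux, hxp, hxq⟩ := hx
      refine le_trans (card_le_of_other _ x
        (univ.filter (fun z => G.Adj x z ∧ pos x < pos z)) ?_ ?_) (hfwd x)
      · intro f hf
        exact (Finset.mem_filter.1 hf).2.1
      · intro w hw
        rw [Finset.mem_filter] at hw
        obtain ⟨hfD, _, huf, hvf⟩ := hw
        obtain ⟨hfe, _, _, hord⟩ := hD _ hfD
        rw [SimpleGraph.mem_edgeSet] at hfe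
        have hwv : w ≠ v := fun h => hvf (by rw [h]; simp [Sym2.mem_iff])
        have hpwv : pos w ≠ pos v := fun h => hwv (hpos h)
        have hxv : x ≠ v := fun h => (by omega : pos x ≠ pos v) (congrArg pos h)
        simp only [sMax_mk, sMin_mk] at hord
        exact Finset.mem_filter.2 ⟨Finset.mem_univ _, hfe, by omega⟩
    calc D4.card ≤ ((Wv ∪ (Cu ∪ Bu)).biUnion
          (fun x => D.filter (fun f => x ∈ f ∧ u ∉ f ∧ v ∉ f))).card :=
        Finset.card_le_card hsub
      _ ≤ ∑ x ∈ Wv ∪ (Cu ∪ Bu),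
          (D.filter (fun f => x ∈ f ∧ u ∉ f ∧ v ∉ f)).card := Finset.card_biUnion_le
      _ ≤ ∑ x ∈ Wv, (D.filter (fun f => x ∈ f ∧ u ∉ f ∧ v ∉ f)).card +
          (∑ x ∈ Cu, (D.filter (fun f => x ∈ f ∧ u ∉ f ∧ v ∉ f)).card +
           ∑ x ∈ Bu, (D.filter (fun f => x ∈ f ∧ u ∉ f ∧ v ∉ f)).card) := by
        refine le_trans (sum_union_le _ _ _) ?_
        exact Nat.add_le_add_left (sum_union_le _ _ _) _
      _ ≤ Wv.card * (k - 1) + (Cu.card * (k - 1) + Bu.card * k) := by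
        have h1 := Finset.sum_le_card_nsmul Wv _ (k - 1) hperW
        have h2 := Finset.sum_le_card_nsmul Cu _ (k - 1) hperC
        have h3 := Finset.sum_le_card_nsmul Bu _ k hperB
        simp only [smul_eq_mul] at h1 h2 h3
        omega
  -- final arithmetic
  have hsum : D.card ≤ (A.card + Wv.card) + A'.card + (A.card + A'.card) * (Δ - 1) +
      (Wv.card * (k - 1) + (Cu.card * (k - 1) + Bu.card * k)) := by omega
  have hZ : (D.card : ℤ) + 2 * (k : ℤ) ^ 2 ≤ (4 * (k : ℤ) - 2) * Δ := by
    have c1 : (A.card : ℤ) ≤ k := by exact_mod_cast F1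
    have c2 : (A'.card : ℤ) + Bu.card + 1 ≤ k := by exact_mod_cast F2
    have c3 : (A'.card : ℤ) + Bu.card + Cu.card + 1 ≤ Δ := by exact_mod_cast F3
    have c4 : (A.card : ℤ) + Wv.card + 1 ≤ Δ := by exact_mod_cast F4
    have c5 : (1 : ℤ) ≤ k := by exact_mod_cast F5
    have c6 : (k : ℤ) ≤ Δ := by exact_mod_cast hk
    have csum : (D.card : ℤ) ≤ (A.card + Wv.card) + A'.card +
        (A.card + A'.card) * ((Δ : ℤ) - 1) +
        (Wv.card * ((k : ℤ) - 1) + (Cu.card * ((k : ℤ) - 1) + Bu.card * k)) := by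
      zify [hΔ1, F5] at hsum
      exact hsum
    have P1 : (0 : ℤ) ≤ ((k : ℤ) - A.card) * ((Δ : ℤ) - k) :=
      mul_nonneg (by linarith) (by linarith)
    have P2 : (0 : ℤ) ≤ ((k : ℤ) - 1 - A'.card - Bu.card) * ((Δ : ℤ) - k) :=
      mul_nonneg (by linarith) (by linarith)
    have P3 : (0 : ℤ) ≤ ((Δ : ℤ) - 1 - A.card - Wv.card) * (k : ℤ) :=
      mul_nonneg (by linarith) (by positivity)
    have P4 : (0 : ℤ) ≤ ((Δ : ℤ) - 1 - A'.card - Bu.card - Cu.card) * ((k : ℤ) - 1) :=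
      mul_nonneg (by linarith) (by linarith)
    have P5 : (0 : ℤ) ≤ (Bu.card : ℤ) * (Δ : ℤ) := by positivity
    nlinarith [P1, P2, P3, P4, P5, csum]
  have hgoal : D.card + 2 * k ^ 2 ≤ (4 * k - 2) * Δ := by
    zify [show 2 ≤ 4 * k by omega]
    linarith [hZ]
  exact Nat.le_sub_of_add_le hgoal

end CountBound

private lemma sMaxMin_lt {V : Type*} (pos : V → ℕ) (n : ℕ) (hbnd : ∀ x, pos x < n)
    (f : Sym2 V) : sMax pos f < n ∧ sMin pos f < n := by
  induction f using Sym2.ind with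
  | _ a b =>
    simp only [sMax_mk, sMin_mk]
    have := hbnd a
    have := hbnd b
    omega

private lemma near_witness {V : Type*} {G : SimpleGraph V} {u v : V} {f : Sym2 V}
    (h : (∃ x, x ∈ (s(u, v) : Sym2 V) ∧ x ∈ f) ∨
      ∃ g ∈ G.edgeSet, (∃ x, x ∈ (s(u, v) : Sym2 V) ∧ x ∈ g) ∧ ∃ w, w ∈ g ∧ w ∈ f) :
    ∃ x, x ∈ f ∧ (x = u ∨ x = v ∨ G.Adj u x ∨ G.Adj v x) := by
  rcases h with ⟨x, hxe, hxf⟩ | ⟨g, hg, ⟨z, hze, hzg⟩, ⟨w, hwg, hwf⟩⟩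
  · rw [Sym2.mem_iff] at hxe
    exact ⟨x, hxf, by tauto⟩
  · rw [Sym2.mem_iff] at hze
    by_cases hwz : w = z
    · subst hwz
      exact ⟨w, hwf, by tauto⟩
    · have hadj : G.Adj z w := adj_of_two_mem hg hzg hwg (Ne.symm hwz)
      rcases hze with rfl | rfl
      · exact ⟨w, hwf, Or.inr (Or.inr (Or.inl hadj))⟩
      · exact ⟨w, hwf, Or.inr (Or.inr (Or.inr hadj))⟩

theorem strong_chromatic_index_of_degenerate {V : Type*} [Fintype V]
    (G : SimpleGraph V) [DecidableRel G.Adj] (k : ℕ)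
    (hdeg : G.Degenerate k) (hk : k ≤ G.maxDegree) :
    G.strongChromaticIndex ≤ (4 * k - 2) * G.maxDegree - 2 * k ^ 2 + 1 := by
  classical
  obtain ⟨pos, hinj, hlt, hfwd0⟩ := order_on G k hdeg Finset.univ
  have hpos : Function.Injective pos := fun x y h =>
    hinj (Finset.mem_coe.2 (Finset.mem_univ x)) (Finset.mem_coe.2 (Finset.mem_univ y)) h
  have hfwd : ∀ x, ((Finset.univ.filter (fun z => G.Adj x z ∧ pos x < pos z)).card ≤ k) :=
    fun x => hfwd0 x (Finset.mem_univ x)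
  set n := Fintype.card V with hn
  have hbnd : ∀ x, pos x < n := by
    intro x
    have := hlt x (Finset.mem_univ x)
    rwa [Finset.card_univ] at this
  set key : Sym2 V → ℕ := ekey pos n with hkey
  set P : Sym2 V → Sym2 V → Prop := fun e f => f ∈ G.edgeSet ∧ e ≠ f ∧
    ((∃ x, x ∈ e ∧ x ∈ f) ∨
      ∃ g ∈ G.edgeSet, (∃ x, x ∈ e ∧ x ∈ g) ∧ ∃ w, w ∈ g ∧ w ∈ f) with hP
  set C : Sym2 V → ℕ := fun e => greedyAux P key (key e) e with hC
  -- key injectivity on edges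
  have keyinj : ∀ e ∈ G.edgeSet, ∀ f ∈ G.edgeSet, key e = key f → e = f := by
    intro e he f hf hkef
    obtain ⟨x, y, rfl⟩ : ∃ x y, e = s(x, y) := by
      induction e using Sym2.ind with | _ a b => exact ⟨a, b, rfl⟩
    obtain ⟨z, w, rfl⟩ : ∃ z w, f = s(z, w) := by
      induction f using Sym2.ind with | _ a b => exact ⟨a, b, rfl⟩
    rw [SimpleGraph.mem_edgeSet] at he hf
    rw [hkey] at hkef
    unfold ekey at hkef
    have h1 := (sMaxMin_lt pos n hbnd s(x, y)).2
    have h2 := (sMaxMin_lt pos n hbnd s(z, w)).2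
    have h3 := (sMaxMin_lt pos n hbnd s(x, y)).1
    have h4 := (sMaxMin_lt pos n hbnd s(z, w)).1
    obtain ⟨hM, hm⟩ := key_eq_elim h1 h2 hkef
    have hMeq : sMax pos s(x, y) = sMax pos s(z, w) := by omega
    simp only [sMax_mk, sMin_mk] at hMeq hm
    have hcases : (pos x = pos z ∧ pos y = pos w) ∨ (pos x = pos w ∧ pos y = pos z) := by
      omega
    rw [Sym2.eq_iff]
    rcases hcases with ⟨ha, hb⟩ | ⟨ha, hb⟩
    · exact Or.inl ⟨hpos ha, hpos hb⟩
    · exact Or.inr ⟨hpos ha, hpos hb⟩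
  -- key color bound for edges
  have main : ∀ un vn : V, G.Adj un vn → pos un < pos vn →
      C s(un, vn) ≤ (4 * k - 2) * G.maxDegree - 2 * k ^ 2 := by
    intro un vn huv hpq
    set D : Finset (Sym2 V) :=
      Finset.univ.filter (fun f => P s(un, vn) f ∧ key f < key s(un, vn)) with hDdef
    have h1 : C s(un, vn) ≤ D.card := by
      rw [hC]
      refine greedyAux_le P key _ _ D ?_
      intro f hPf hkf
      exact Finset.mem_filter.2 ⟨Finset.mem_univ _, hPf, hkf⟩
    refine le_trans h1 (count_bound G k pos hpos hfwd hk un vn huv hpq D ?_)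
    intro f hfD
    rw [hDdef, Finset.mem_filter] at hfD
    obtain ⟨_, ⟨hfe, hfne, hnear⟩, hkf⟩ := hfD
    refine ⟨hfe, Ne.symm hfne, near_witness hnear, ?_⟩
    rw [hkey] at hkf
    unfold ekey at hkf
    have h2 := sMaxMin_lt pos n hbnd f
    have h3 := sMaxMin_lt pos n hbnd s(un, vn)
    have h4 := key_lt_elim h3.1 h3.2 h2.2 hkf
    simp only [sMax_mk, sMin_mk] at h4 ⊢
    omega
  have hcol : ∀ e ∈ G.edgeSet, C e < (4 * k - 2) * G.maxDegree - 2 * k ^ 2 + 1 := by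
    intro e he
    rw [Nat.lt_succ_iff]
    obtain ⟨x, y, rfl⟩ : ∃ x y, e = s(x, y) := by
      induction e using Sym2.ind with | _ a b => exact ⟨a, b, rfl⟩
    rw [SimpleGraph.mem_edgeSet] at he
    have hxy : pos x ≠ pos y := fun h => (G.ne_of_adj he) (hpos h)
    rcases lt_or_gt_of_ne hxy with h | h
    · exact main x y he h
    · rw [Sym2.eq_swap]
      exact main y x he.symm h
  have hstrong : G.IsStrongEdgeColoring C := by
    intro e he f hf hef hcond
    have hPef : P e f := ⟨hf, hef, hcond⟩
    have hPfe : P f e := by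
      refine ⟨he, Ne.symm hef, ?_⟩
      rcases hcond with ⟨x, hx1, hx2⟩ | ⟨g, hg, ⟨z, hz1, hz2⟩, ⟨w, hw1, hw2⟩⟩
      · exact Or.inl ⟨x, hx2, hx1⟩
      · exact Or.inr ⟨g, hg, ⟨w, hw2, hw1⟩, ⟨z, hz2, hz1⟩⟩
    have hkne : key e ≠ key f := fun h => hef (keyinj e he f hf h)
    rcases lt_or_gt_of_ne hkne with h | h
    · exact greedyAux_mem P key (key f) f e hPfe h
    · exact (greedyAux_mem P key (key e) e f hPef h).symm
  exact Nat.sInf_le ⟨C, hcol, hstrong⟩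
end

section
/- If G is a k-degenerate simple graph with at least one edge, then there exists a vertex w of G such that at least max{1, deg(w) − k} of the neighbors of w have degree at most k. -/
namespace SimpleGraph

variable {V : Type*} [Fintype V] (G : SimpleGraph V) [DecidableRel G.Adj]

lemma degree_eq_card_filter_degree_le_add_card_filter_adj (w : V) (k : ℕ) :
    G.degree w = ((G.neighborFinset w).filter (fun u => G.degree u ≤ k)).card +
      ((Finset.univ.filter (fun u => k < G.degree u)).filter (G.Adj w)).card := by
  rw [← card_neighborFinset_eq_degree,
    ← Finset.card_filter_add_card_filter_not (fun u => G.degree u ≤ k)]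
  congr 2
  ext u
  simp [and_comm]

lemma exists_one_le_card_filter_degree_le_of_forall_degree_le {k : ℕ}
    (hne : G.edgeSet.Nonempty) (hmax : ∀ v, G.degree v ≤ k) :
    ∃ w, 1 ≤ ((G.neighborFinset w).filter (fun u => G.degree u ≤ k)).card := by
  obtain ⟨e, he⟩ := hne
  induction e with
  | h u v =>
    exact ⟨u, Finset.card_pos.mpr ⟨v, by simpa [hmax v] using he⟩⟩

variable {G} in
/-- Degeneracy applied to the set of vertices of degree more than `k`. -/
lemma Degenerate.exists_degree_sub_le_card_filter_degree_le {k : ℕ}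
    (hdeg : G.Degenerate k) (hlarge : ∃ v, k < G.degree v) :
    ∃ w, k < G.degree w ∧
      G.degree w - k ≤ ((G.neighborFinset w).filter (fun u => G.degree u ≤ k)).card := by
  obtain ⟨v, hv⟩ := hlarge
  obtain ⟨w, hw, hsmall⟩ :=
    hdeg (Finset.univ.filter (fun u => k < G.degree u)) ⟨v, by simpa using hv⟩
  refine ⟨w, by simpa using hw, ?_⟩
  have := G.degree_eq_card_filter_degree_le_add_card_filter_adj w k
  omega

end SimpleGraph

theorem degenerate_exists_nice_vertex {V : Type*} [Fintype V]
    (G : SimpleGraph V) [DecidableRel G.Adj] (k : ℕ)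
    (hdeg : G.Degenerate k) (hne : G.edgeSet.Nonempty) :
    ∃ w : V, max 1 (G.degree w - k) ≤
      ((G.neighborFinset w).filter (fun u => G.degree u ≤ k)).card := by
  by_cases hmax : ∀ v, G.degree v ≤ k
  · obtain ⟨w, hw⟩ := G.exists_one_le_card_filter_degree_le_of_forall_degree_le hne hmax
    exact ⟨w, by rwa [Nat.sub_eq_zero_of_le (hmax w), max_eq_left (Nat.zero_le 1)]⟩
  · simp only [not_forall, not_le] at hmax
    obtain ⟨w, hk, hw⟩ := hdeg.exists_degree_sub_le_card_filter_degree_le hmax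
    exact ⟨w, max_le (by omega) hw⟩
end

section
/- If G is a simple graph with at least one edge such that the subgraph induced by the vertices of degree at least 3 is a forest (has no cycles), then there exists a vertex w of G such that at least max{1, deg(w) − 1} of the neighbors of w have degree at most 2. -/
open SimpleGraph Walk

/-- In a path ending (starting) at `v`, at most one edge contains `v` as first endpoint. -/
lemma path_start_edge_unique {W : Type*} {H : SimpleGraph W} {v u : W}
    (q : H.Walk v u) (hq : q.IsPath) {w₁ w₂ : W}
    (h₁ : s(v, w₁) ∈ q.edges) (h₂ : s(v, w₂) ∈ q.edges) : w₁ = w₂ := by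
  cases q with
  | nil => simp at h₁
  | @cons _ x _ h q' =>
    rw [Walk.cons_isPath_iff] at hq
    rw [Walk.edges_cons, List.mem_cons] at h₁ h₂
    have key : ∀ w, s(v, w) = s(v, x) ∨ s(v, w) ∈ q'.edges → w = x := by
      intro w hw
      rcases hw with hw | hw
      · rw [Sym2.eq_iff] at hw
        rcases hw with ⟨-, h2⟩ | ⟨h1, -⟩
        · exact h2
        · exact absurd h1 h.ne
      · exact absurd (Walk.fst_mem_support_of_mem_edges q' hw) hq.2
    rw [key w₁ h₁, key w₂ h₂]

/-- A finite acyclic graph on a nonempty vertex type has a vertex with at most one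
neighbor. -/
lemma exists_small_vertex_of_acyclic {W : Type*} [Finite W] [Nonempty W]
    (H : SimpleGraph W) (hac : H.IsAcyclic) :
    ∃ v : W, ∀ w₁ w₂ : W, H.Adj v w₁ → H.Adj v w₂ → w₁ = w₂ := by
  classical
  have : Fintype W := Fintype.ofFinite W
  set S : Set ℕ := {n | ∃ (u v : W) (p : H.Walk u v), p.IsPath ∧ p.length = n} with hS
  have h0 : 0 ∈ S := ⟨Classical.arbitrary W, Classical.arbitrary W, Walk.nil, Walk.IsPath.nil, rfl⟩
  have hbdd : BddAbove S := by
    refine ⟨Fintype.card W, ?_⟩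
    rintro n ⟨u, v, p, hp, rfl⟩
    exact (hp.length_lt).le
  obtain ⟨u, v, p, hp, hlen⟩ := Nat.sSup_mem ⟨0, h0⟩ hbdd
  refine ⟨v, ?_⟩
  have hkey : ∀ w, H.Adj v w → s(v, w) ∈ p.edges := by
    intro w hw
    by_cases hws : w ∈ p.support
    · by_contra hne
      have hq : (p.dropUntil w hws).IsPath := hp.dropUntil hws
      have hcyc : (Walk.cons hw (p.dropUntil w hws)).IsCycle :=
        (Walk.cons_isCycle_iff _ hw).2
          ⟨hq, fun hmem => hne (Walk.edges_dropUntil_subset p hws hmem)⟩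
      exact hac _ hcyc
    · exfalso
      have hq : (p.concat hw).IsPath := by
        rw [← Walk.isPath_reverse_iff, Walk.reverse_concat, Walk.cons_isPath_iff]
        exact ⟨hp.reverse, by simpa using hws⟩
      have hmem : p.length + 1 ∈ S := ⟨u, w, p.concat hw, hq, Walk.length_concat p hw⟩
      have := le_csSup hbdd hmem
      omega
  intro w₁ w₂ h₁ h₂
  have e₁ : s(v, w₁) ∈ p.reverse.edges := by
    rw [Walk.edges_reverse, List.mem_reverse]; exact hkey _ h₁
  have e₂ : s(v, w₂) ∈ p.reverse.edges := by
    rw [Walk.edges_reverse, List.mem_reverse]; exact hkey _ h₂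
  exact path_start_edge_unique p.reverse (hp.reverse) e₁ e₂


theorem exists_nice_vertex_of_big_vertices_forest {V : Type*} [Fintype V]
    (G : SimpleGraph V) [DecidableRel G.Adj]
    (hforest : (G.induce {v : V | 3 ≤ G.degree v}).IsAcyclic)
    (hne : G.edgeSet.Nonempty) :
    ∃ w : V, max 1 (G.degree w - 1) ≤
      ((G.neighborFinset w).filter (fun u => G.degree u ≤ 2)).card := by
  classical
  by_cases hB : ∃ v, 3 ≤ G.degree v
  · haveI : Nonempty {v : V | 3 ≤ G.degree v} := ⟨⟨hB.choose, hB.choose_spec⟩⟩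
    obtain ⟨v0, hv0⟩ := exists_small_vertex_of_acyclic _ hforest
    refine ⟨(v0 : V), ?_⟩
    have hdeg : 3 ≤ G.degree (v0 : V) := v0.2
    have hfilters := Finset.card_filter_add_card_filter_not
      (s := G.neighborFinset (v0 : V)) (p := fun u => G.degree u ≤ 2)
    have hcard : (G.neighborFinset (v0 : V)).card = G.degree (v0 : V) :=
      G.card_neighborFinset_eq_degree _
    have hbig : ((G.neighborFinset (v0 : V)).filter (fun u => ¬ G.degree u ≤ 2)).card ≤ 1 := by
      rw [Finset.card_le_one]
      intro a ha b hb
      rw [Finset.mem_filter, SimpleGraph.mem_neighborFinset] at ha hb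
      have ha3 : 3 ≤ G.degree a := by omega
      have hb3 : 3 ≤ G.degree b := by omega
      have h1 : (G.induce {v : V | 3 ≤ G.degree v}).Adj v0 ⟨a, ha3⟩ := by
        simp only [SimpleGraph.comap_adj, Function.Embedding.coe_subtype]
        exact ha.1
      have h2 : (G.induce {v : V | 3 ≤ G.degree v}).Adj v0 ⟨b, hb3⟩ := by
        simp only [SimpleGraph.comap_adj, Function.Embedding.coe_subtype]
        exact hb.1
      have := hv0 _ _ h1 h2
      exact congrArg Subtype.val this
    apply max_le <;> omega
  · push_neg at hB
    obtain ⟨x, y, hxy⟩ : ∃ x y, G.Adj x y := by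
      obtain ⟨e, he⟩ := hne
      induction e with
      | h a b => exact ⟨a, b, he⟩
    refine ⟨x, ?_⟩
    have hy : y ∈ (G.neighborFinset x).filter (fun u => G.degree u ≤ 2) :=
      Finset.mem_filter.2 ⟨(G.mem_neighborFinset x y).2 hxy, by have := hB y; omega⟩
    have h1 : 1 ≤ ((G.neighborFinset x).filter (fun u => G.degree u ≤ 2)).card :=
      Finset.card_pos.2 ⟨y, hy⟩
    have h2 := hB x
    apply max_le <;> omega
end

section
/- If G is a simple graph with maximum degree Δ(G) such that the subgraph induced by the vertices of degree at least 3 is a forest (has no cycles), then the strong chromatic index of G satisfies χ'_s(G) ≤ 4·Δ(G) − 3. -/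
open Finset

private def Conf {V : Type*} (G : SimpleGraph V) (e f : Sym2 V) : Prop :=
  e ≠ f ∧ ((∃ v, v ∈ e ∧ v ∈ f) ∨
      ∃ g ∈ G.edgeSet, (∃ v, v ∈ e ∧ v ∈ g) ∧ ∃ w, w ∈ g ∧ w ∈ f)

private lemma conf_symm {V : Type*} (G : SimpleGraph V) {e f : Sym2 V}
    (h : Conf G e f) : Conf G f e := by
  obtain ⟨hne, h⟩ := h
  refine ⟨hne.symm, ?_⟩
  rcases h with ⟨v, hv, hv'⟩ | ⟨g, hg, ⟨x, hx, hx'⟩, ⟨w, hw, hw'⟩⟩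
  · exact Or.inl ⟨v, hv', hv⟩
  · exact Or.inr ⟨g, hg, ⟨w, hw', hw⟩, ⟨x, hx', hx⟩⟩

private lemma edge_decomp {V : Type*} {G : SimpleGraph V} {f : Sym2 V} {x : V}
    (hf : f ∈ G.edgeSet) (hx : x ∈ f) : ∃ y, G.Adj x y ∧ f = s(x, y) := by
  obtain ⟨y, rfl⟩ := Sym2.mem_iff_exists.mp hx
  exact ⟨y, hf, rfl⟩

private lemma sum_bound {α : Type*} (T : Finset α) (f : α → ℕ) (q : α → Prop)
    [DecidablePred q] (a b : ℕ) (hba : b ≤ a)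
    (hq : ∀ w ∈ T, f w ≤ a) (hnq : ∀ w ∈ T, ¬ q w → f w ≤ b)
    (hqcard : (T.filter q).card ≤ 1) :
    ∑ w ∈ T, f w ≤ a + (T.card - 1) * b := by
  classical
  rw [← Finset.sum_filter_add_sum_filter_not T q f]
  have h1 : ∑ w ∈ T.filter (fun x => q x), f w ≤ (T.filter (fun x => q x)).card * a := by
    simpa using Finset.sum_le_card_nsmul _ _ a (fun w hw => hq w (Finset.mem_filter.mp hw).1)
  have h2 : ∑ w ∈ T.filter (fun x => ¬ q x), f w ≤ (T.filter (fun x => ¬ q x)).card * b := by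
    simpa using Finset.sum_le_card_nsmul _ _ b
      (fun w hw => hnq w (Finset.mem_filter.mp hw).1 (Finset.mem_filter.mp hw).2)
  have hcards : (T.filter (fun x => q x)).card + (T.filter (fun x => ¬ q x)).card = T.card :=
    Finset.card_filter_add_card_filter_not _
  have hqcard' : (T.filter (fun x => q x)).card ≤ 1 := hqcard
  rcases Nat.le_one_iff_eq_zero_or_eq_one.mp hqcard' with hQ | hQ
  · rw [hQ] at hcards h1
    rw [show (T.filter (fun x => ¬ q x)).card = T.card by omega] at h2
    have hb : T.card * b ≤ (T.card - 1) * b + b := by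
      cases T.card with
      | zero => simp
      | succ n => simp [Nat.succ_sub_one, Nat.succ_mul]
    simp only [Nat.zero_mul] at h1
    generalize (T.card - 1) * b = X at *
    generalize T.card * b = Y at *
    omega
  · rw [hQ, one_mul] at h1
    rw [show (T.filter (fun x => ¬ q x)).card = T.card - 1 by omega] at h2
    generalize (T.card - 1) * b = X at *
    omega
open scoped Classical in
private lemma greedy {V : Type*} [Fintype V] (G : SimpleGraph V) [DecidableRel G.Adj] (k : ℕ)
    (hdeg : ∀ S ⊆ G.edgeFinset, S.Nonempty →
      ∃ e ∈ S, (S.filter (fun f => Conf G e f)).card ≤ k) :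
    ∀ S ⊆ G.edgeFinset, ∃ C : Sym2 V → ℕ, (∀ e ∈ S, C e < k + 1) ∧
      ∀ e ∈ S, ∀ f ∈ S, Conf G e f → C e ≠ C f := by
  intro S
  induction S using Finset.strongInduction with
  | _ S ih =>
    intro hSsub
    rcases S.eq_empty_or_nonempty with rfl | hSne
    · exact ⟨fun _ => 0, by simp, by simp⟩
    obtain ⟨e, heS, hecard⟩ := hdeg S hSsub hSne
    obtain ⟨C, hC1, hC2⟩ := ih (S.erase e) (Finset.erase_ssubset heS)
      ((Finset.erase_subset _ _).trans hSsub)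
    set used := ((S.erase e).filter (fun f => Conf G e f)).image C with hused
    have husedcard : used.card ≤ k :=
      le_trans Finset.card_image_le
        (le_trans (Finset.card_le_card
          (Finset.filter_subset_filter _ (Finset.erase_subset _ _))) hecard)
    have hne : (Finset.range (k+1) \ used).Nonempty := by
      rw [← Finset.card_pos]
      have h3 := Finset.le_card_sdiff used (Finset.range (k+1))
      rw [Finset.card_range] at h3
      omega
    obtain ⟨c, hc⟩ := hne
    have hcrange : c < k + 1 := Finset.mem_range.mp (Finset.mem_sdiff.mp hc).1
    have hcused : c ∉ used := (Finset.mem_sdiff.mp hc).2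
    refine ⟨Function.update C e c, ?_, ?_⟩
    · intro f hf
      rcases eq_or_ne f e with rfl | hfe
      · simpa using hcrange
      · rw [Function.update_of_ne hfe]; exact hC1 f (Finset.mem_erase.mpr ⟨hfe, hf⟩)
    · intro f hf g hg hconf
      by_cases hfe : f = e <;> by_cases hge : g = e
      · exact absurd (hfe.trans hge.symm) hconf.1
      · rw [hfe, Function.update_self, Function.update_of_ne hge]
        intro hcontra
        rw [hfe] at hconf
        exact hcused (Finset.mem_image.mpr ⟨g,
          Finset.mem_filter.mpr ⟨Finset.mem_erase.mpr ⟨hge, hg⟩, hconf⟩, hcontra.symm⟩)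
      · rw [hge, Function.update_self, Function.update_of_ne hfe]
        intro hcontra
        rw [hge] at hconf
        exact hcused (Finset.mem_image.mpr ⟨f,
          Finset.mem_filter.mpr ⟨Finset.mem_erase.mpr ⟨hfe, hf⟩, conf_symm G hconf⟩, hcontra⟩)
      · rw [Function.update_of_ne hfe, Function.update_of_ne hge]
        exact hC2 f (Finset.mem_erase.mpr ⟨hfe, hf⟩) g (Finset.mem_erase.mpr ⟨hge, hg⟩) hconf
private lemma forest_deg {W : Type*} [Fintype W] (F : SimpleGraph W) [DecidableRel F.Adj] (hF : F.IsAcyclic)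
    (T : Finset W) (hT : T.Nonempty) :
    ∃ x ∈ T, (T.filter (fun y => F.Adj x y)).card ≤ 1 := by
  classical
  set P : Set ℕ := {n | ∃ (u v : W) (p : F.Walk u v), p.IsPath ∧
    (∀ z ∈ p.support, z ∈ T) ∧ p.length = n} with hP
  obtain ⟨t, ht⟩ := hT
  have hne : P.Nonempty := ⟨0, t, t, SimpleGraph.Walk.nil, by simp, by simp [ht], rfl⟩
  have hbdd : BddAbove P := by
    refine ⟨Fintype.card W, ?_⟩
    rintro n ⟨u, v, p, hp, _, rfl⟩
    exact hp.length_lt.le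
  obtain ⟨u, v, p, hp, hsup, hlen⟩ := Nat.sSup_mem hne hbdd
  refine ⟨u, hsup u p.start_mem_support, ?_⟩
  by_contra hcard
  push_neg at hcard
  obtain ⟨a, haf, b, hbf, hab⟩ := Finset.one_lt_card.mp hcard
  have haT := (Finset.mem_filter.mp haf).1
  have haA : F.Adj u a := (Finset.mem_filter.mp haf).2
  have hbT := (Finset.mem_filter.mp hbf).1
  have hbA : F.Adj u b := (Finset.mem_filter.mp hbf).2
  have hext : ∀ c, c ∈ T → F.Adj u c → c ∉ p.support → False := by
    intro c hcT hadj hcs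
    have h1 : p.length + 1 ∈ P := by
      refine ⟨c, v, SimpleGraph.Walk.cons hadj.symm p, hp.cons hcs, ?_, by simp⟩
      intro z hz
      rw [SimpleGraph.Walk.support_cons] at hz
      rcases List.mem_cons.mp hz with rfl | hz
      · exact hcT
      · exact hsup z hz
    have := le_csSup hbdd h1
    omega
  cases p with
  | nil =>
    refine hext a haT haA ?_
    rw [SimpleGraph.Walk.support_nil]
    simp only [List.mem_singleton]
    exact haA.ne'
  | @cons _ s _ hadj q =>
    have hps : ∃ c, c ∈ T ∧ F.Adj u c ∧ c ≠ s := by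
      rcases eq_or_ne a s with rfl | has
      · exact ⟨b, hbT, hbA, fun h => hab h.symm⟩
      · exact ⟨a, haT, haA, has⟩
    obtain ⟨c, hcT, hcA, hcs⟩ := hps
    by_cases hcp : c ∈ (SimpleGraph.Walk.cons hadj q).support
    · have hP1 : ((SimpleGraph.Walk.cons hadj q).takeUntil c hcp).IsPath := hp.takeUntil hcp
      have hequ : (⟨(SimpleGraph.Walk.cons hadj q).takeUntil c hcp, hP1⟩ : F.Path u c)
          = SimpleGraph.Path.singleton hcA := hF.path_unique _ _
      have hspec := SimpleGraph.Walk.take_spec (SimpleGraph.Walk.cons hadj q) hcp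
      rw [show (SimpleGraph.Walk.cons hadj q).takeUntil c hcp
          = (SimpleGraph.Path.singleton hcA : F.Walk u c) from congrArg Subtype.val hequ] at hspec
      have hgv := congrArg (fun w => w.getVert 1) hspec
      simp only [SimpleGraph.Path.singleton, SimpleGraph.Walk.cons_append,
        SimpleGraph.Walk.getVert_cons_succ, SimpleGraph.Walk.getVert_zero,
        SimpleGraph.Walk.nil_append] at hgv
      exact hcs hgv
    · exact hext c hcT hcA hcp
open scoped Classical in
private lemma inc_card_le {V : Type*} [Fintype V] (G : SimpleGraph V) [DecidableRel G.Adj]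
    {S : Finset (Sym2 V)} (hS : S ⊆ G.edgeFinset) (x : V) :
    (S.filter (fun f => x ∈ f)).card ≤ G.degree x := by
  classical
  rw [← SimpleGraph.card_incidenceFinset_eq_degree]
  apply Finset.card_le_card
  intro f hf
  obtain ⟨hfS, hxf⟩ := Finset.mem_filter.mp hf
  rw [SimpleGraph.mem_incidenceFinset]
  exact ⟨SimpleGraph.mem_edgeFinset.mp (hS hfS), hxf⟩

open scoped Classical in
private lemma B_card_bound {V : Type*} [Fintype V] (G : SimpleGraph V) [DecidableRel G.Adj]
    {S : Finset (Sym2 V)} (hS : S ⊆ G.edgeFinset) {u v x w : V}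
    (hx : x = u ∨ x = v) (hadj : G.Adj x w) :
    (S.filter (fun f => w ∈ f ∧ u ∉ f ∧ v ∉ f)).card + 1 ≤ G.degree w := by
  classical
  rw [← SimpleGraph.card_incidenceFinset_eq_degree]
  have hnotmem : s(x,w) ∉ S.filter (fun f => w ∈ f ∧ u ∉ f ∧ v ∉ f) := by
    intro hmem
    obtain ⟨_, _, hu, hv⟩ := Finset.mem_filter.mp hmem
    rcases hx with rfl | rfl
    · exact hu (Sym2.mem_mk_left _ _)
    · exact hv (Sym2.mem_mk_left _ _)
  have hins : insert s(x,w) (S.filter (fun f => w ∈ f ∧ u ∉ f ∧ v ∉ f))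
      ⊆ G.incidenceFinset w := by
    intro f hf
    rw [SimpleGraph.mem_incidenceFinset]
    rcases Finset.mem_insert.mp hf with rfl | hf
    · exact ⟨G.mem_edgeSet.mpr hadj, Sym2.mem_mk_right _ _⟩
    · obtain ⟨hfS, hwf, _, _⟩ := Finset.mem_filter.mp hf
      exact ⟨SimpleGraph.mem_edgeFinset.mp (hS hfS), hwf⟩
  calc (S.filter (fun f => w ∈ f ∧ u ∉ f ∧ v ∉ f)).card + 1
      = (insert s(x,w) (S.filter (fun f => w ∈ f ∧ u ∉ f ∧ v ∉ f))).card :=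
        (Finset.card_insert_of_notMem hnotmem).symm
    _ ≤ _ := Finset.card_le_card hins
open scoped Classical in
private lemma cover_bound {V : Type*} [Fintype V] (G : SimpleGraph V) [DecidableRel G.Adj]
    {S : Finset (Sym2 V)} (hS : S ⊆ G.edgeFinset) {u v : V} (huv : G.Adj u v)
    (he : s(u,v) ∈ S) :
    (S.filter (fun f => Conf G s(u,v) f)).card + 2 ≤
      (S.filter (fun f => u ∈ f)).card + (S.filter (fun f => v ∈ f)).card
      + ∑ w ∈ G.neighborFinset u \ {v}, (S.filter (fun f => w ∈ f ∧ u ∉ f ∧ v ∉ f)).card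
      + ∑ w ∈ G.neighborFinset v \ {u}, (S.filter (fun f => w ∈ f ∧ u ∉ f ∧ v ∉ f)).card := by
  classical
  set A1 := (S.filter (fun f => u ∈ f)).erase s(u,v) with hA1
  set A2 := (S.filter (fun f => v ∈ f)).erase s(u,v) with hA2
  set Z1 := (G.neighborFinset u \ {v}).biUnion
      (fun w => S.filter (fun f => w ∈ f ∧ u ∉ f ∧ v ∉ f)) with hZ1
  set Z2 := (G.neighborFinset v \ {u}).biUnion
      (fun w => S.filter (fun f => w ∈ f ∧ u ∉ f ∧ v ∉ f)) with hZ2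
  have hsub : S.filter (fun f => Conf G s(u,v) f) ⊆ A1 ∪ A2 ∪ Z1 ∪ Z2 := by
    intro f hf
    obtain ⟨hfS, hne, hcase⟩ := Finset.mem_filter.mp hf
    have hmain : ∀ x : V, x ∈ (s(u,v) : Sym2 V) → x ∈ f → f ∈ A1 ∪ A2 ∪ Z1 ∪ Z2 := by
      intro x hxe hxf
      rcases Sym2.mem_iff.mp hxe with rfl | rfl
      · exact Finset.mem_union_left _ (Finset.mem_union_left _ (Finset.mem_union_left _
          (Finset.mem_erase.mpr ⟨hne.symm, Finset.mem_filter.mpr ⟨hfS, hxf⟩⟩)))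
      · exact Finset.mem_union_left _ (Finset.mem_union_left _ (Finset.mem_union_right _
          (Finset.mem_erase.mpr ⟨hne.symm, Finset.mem_filter.mpr ⟨hfS, hxf⟩⟩)))
    rcases hcase with ⟨x, hxe, hxf⟩ | ⟨g, hg, ⟨x, hxe, hxg⟩, ⟨w, hwg, hwf⟩⟩
    · exact hmain x hxe hxf
    · by_cases huf : u ∈ f
      · exact hmain u (Sym2.mem_mk_left _ _) huf
      by_cases hvf : v ∈ f
      · exact hmain v (Sym2.mem_mk_right _ _) hvf
      have hwu : w ≠ u := fun h => huf (h ▸ hwf)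
      have hwv : w ≠ v := fun h => hvf (h ▸ hwf)
      have hxw : x ≠ w := by
        rintro rfl
        rcases Sym2.mem_iff.mp hxe with rfl | rfl
        · exact hwu rfl
        · exact hwv rfl
      have hgeq : g = s(x, w) := (Sym2.mem_and_mem_iff hxw).mp ⟨hxg, hwg⟩
      have hadj : G.Adj x w := G.mem_edgeSet.mp (hgeq ▸ hg)
      have hfB : f ∈ S.filter (fun f => w ∈ f ∧ u ∉ f ∧ v ∉ f) :=
        Finset.mem_filter.mpr ⟨hfS, hwf, huf, hvf⟩
      rcases Sym2.mem_iff.mp hxe with rfl | rfl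
      · refine Finset.mem_union_left _ (Finset.mem_union_right _ ?_)
        exact Finset.mem_biUnion.mpr ⟨w, Finset.mem_sdiff.mpr
          ⟨(G.mem_neighborFinset _ _).mpr hadj, by simpa using hwv⟩, hfB⟩
      · refine Finset.mem_union_right _ ?_
        exact Finset.mem_biUnion.mpr ⟨w, Finset.mem_sdiff.mpr
          ⟨(G.mem_neighborFinset _ _).mpr hadj, by simpa using hwu⟩, hfB⟩
  have hcard : (S.filter (fun f => Conf G s(u,v) f)).card ≤
      A1.card + A2.card + Z1.card + Z2.card := by
    calc (S.filter (fun f => Conf G s(u,v) f)).card ≤ (A1 ∪ A2 ∪ Z1 ∪ Z2).card :=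
          Finset.card_le_card hsub
      _ ≤ (A1 ∪ A2 ∪ Z1).card + Z2.card := Finset.card_union_le _ _
      _ ≤ (A1 ∪ A2).card + Z1.card + Z2.card := by
          have := Finset.card_union_le (A1 ∪ A2) Z1
          omega
      _ ≤ A1.card + A2.card + Z1.card + Z2.card := by
          have := Finset.card_union_le A1 A2
          omega
  have hA1card : A1.card + 1 = (S.filter (fun f => u ∈ f)).card := by
    rw [hA1]
    exact Finset.card_erase_add_one (Finset.mem_filter.mpr ⟨he, Sym2.mem_mk_left _ _⟩)
  have hA2card : A2.card + 1 = (S.filter (fun f => v ∈ f)).card := by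
    rw [hA2]
    exact Finset.card_erase_add_one (Finset.mem_filter.mpr ⟨he, Sym2.mem_mk_right _ _⟩)
  have hZ1card : Z1.card ≤
      ∑ w ∈ G.neighborFinset u \ {v}, (S.filter (fun f => w ∈ f ∧ u ∉ f ∧ v ∉ f)).card :=
    Finset.card_biUnion_le
  have hZ2card : Z2.card ≤
      ∑ w ∈ G.neighborFinset v \ {u}, (S.filter (fun f => w ∈ f ∧ u ∉ f ∧ v ∉ f)).card :=
    Finset.card_biUnion_le
  omega
open scoped Classical in
private lemma big_deg {V : Type*} [Fintype V] (G : SimpleGraph V) [DecidableRel G.Adj]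
    (hforest : (G.induce {v : V | 3 ≤ G.degree v}).IsAcyclic)
    (T : Finset V) (hbig : ∀ x ∈ T, 3 ≤ G.degree x) (hT : T.Nonempty) :
    ∃ x ∈ T, (T.filter (fun y => G.Adj x y)).card ≤ 1 := by
  classical
  haveI : Fintype ↥{v : V | 3 ≤ G.degree v} := Fintype.ofFinite _
  set T' : Finset ↥{v : V | 3 ≤ G.degree v} := T.attach.image
    (fun x => (⟨x.1, hbig x.1 x.2⟩ : ↥{v : V | 3 ≤ G.degree v})) with hT'
  have hT'mem : ∀ y : ↥{v : V | 3 ≤ G.degree v}, y ∈ T' ↔ (y : V) ∈ T := by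
    intro y
    rw [hT']
    simp only [Finset.mem_image, Finset.mem_attach, true_and]
    constructor
    · rintro ⟨z, rfl⟩; exact z.2
    · intro hy; exact ⟨⟨(y : V), hy⟩, Subtype.ext rfl⟩
  obtain ⟨t, ht⟩ := hT
  have hT'ne : T'.Nonempty := ⟨⟨t, hbig t ht⟩, (hT'mem _).mpr ht⟩
  obtain ⟨x', hx'T', hx'⟩ := forest_deg _ hforest T' hT'ne
  refine ⟨(x' : V), (hT'mem x').mp hx'T', ?_⟩
  have himg : T.filter (fun y => G.Adj (x' : V) y) =
      (T'.filter (fun y => (G.induce {v : V | 3 ≤ G.degree v}).Adj x' y)).image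
        (Subtype.val) := by
    ext y
    simp only [Finset.mem_image, Finset.mem_filter, SimpleGraph.comap_adj,
      Function.Embedding.coe_subtype]
    constructor
    · rintro ⟨hyT, hadj⟩
      exact ⟨⟨y, hbig y hyT⟩, ⟨(hT'mem _).mpr hyT, hadj⟩, rfl⟩
    · rintro ⟨y', ⟨hy'T', hadj⟩, rfl⟩
      exact ⟨(hT'mem y').mp hy'T', hadj⟩
  rw [himg]
  exact le_trans Finset.card_image_le hx'
private lemma two_edges_degree {V : Type*} [Fintype V] (G : SimpleGraph V)
    [DecidableRel G.Adj] {e f : Sym2 V} {x : V}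
    (he : e ∈ G.edgeSet) (hf : f ∈ G.edgeSet) (hef : e ≠ f) (hxe : x ∈ e) (hxf : x ∈ f) :
    2 ≤ G.degree x := by
  classical
  obtain ⟨y, hy, rfl⟩ := edge_decomp he hxe
  obtain ⟨z, hz, rfl⟩ := edge_decomp hf hxf
  have hyz : y ≠ z := fun h => hef (by rw [h])
  rw [← SimpleGraph.card_neighborFinset_eq_degree]
  exact Finset.one_lt_card.mpr ⟨y, (SimpleGraph.mem_neighborFinset _ _ _).mpr hy, z,
    (SimpleGraph.mem_neighborFinset _ _ _).mpr hz, hyz⟩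

private lemma nbr_card {V : Type*} [Fintype V] [DecidableEq V] (G : SimpleGraph V)
    [DecidableRel G.Adj] {u v : V} (h : G.Adj u v) :
    (G.neighborFinset u \ {v}).card + 1 = G.degree u := by
  have hv : v ∈ G.neighborFinset u := (SimpleGraph.mem_neighborFinset _ _ _).mpr h
  rw [Finset.card_sdiff_of_subset (Finset.singleton_subset_iff.mpr hv), Finset.card_singleton]
  have h1 : 1 ≤ (G.neighborFinset u).card := Finset.card_pos.mpr ⟨v, hv⟩
  rw [SimpleGraph.card_neighborFinset_eq_degree] at *
  omega

open scoped Classical in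
private lemma B_le_inc {V : Type*} (S : Finset (Sym2 V)) (u v w : V) :
    (S.filter (fun f => w ∈ f ∧ u ∉ f ∧ v ∉ f)).card ≤ (S.filter (fun f => w ∈ f)).card :=
  Finset.card_le_card (fun f hf => Finset.mem_filter.mpr
    ⟨(Finset.mem_filter.mp hf).1, (Finset.mem_filter.mp hf).2.1⟩)

open scoped Classical in
private lemma side_bound {V : Type*} [Fintype V] (G : SimpleGraph V) [DecidableRel G.Adj]
    {S : Finset (Sym2 V)} (hS : S ⊆ G.edgeFinset) {u v x y : V}
    (hxy : (x = u ∧ y = v) ∨ (x = v ∧ y = u)) (hadj : G.Adj x y)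
    (q : V → Prop) [DecidablePred q]
    (hq1 : ((G.neighborFinset x \ {y}).filter q).card ≤ 1)
    (hqb : ∀ w ∈ G.neighborFinset x \ {y}, ¬ q w →
      (S.filter (fun f => w ∈ f ∧ u ∉ f ∧ v ∉ f)).card ≤ 1)
    (hD2 : 2 ≤ G.maxDegree) :
    ∑ w ∈ G.neighborFinset x \ {y}, (S.filter (fun f => w ∈ f ∧ u ∉ f ∧ v ∉ f)).card
      ≤ (G.maxDegree - 1) + (G.degree x - 2) := by
  classical
  have hx : x = u ∨ x = v := by rcases hxy with ⟨h1, _⟩ | ⟨h1, _⟩ <;> [left; right] <;> exact h1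
  have hptw : ∀ w ∈ G.neighborFinset x \ {y},
      (S.filter (fun f => w ∈ f ∧ u ∉ f ∧ v ∉ f)).card ≤ G.maxDegree - 1 := by
    intro w hw
    have hadj' : G.Adj x w :=
      (SimpleGraph.mem_neighborFinset _ _ _).mp (Finset.mem_sdiff.mp hw).1
    have h1 := B_card_bound G hS hx hadj'
    have h2 := G.degree_le_maxDegree w
    omega
  have hsum := sum_bound (G.neighborFinset x \ {y}) _ q (G.maxDegree - 1) 1
    (by omega) hptw hqb hq1
  have hnc := nbr_card G hadj
  rw [mul_one] at hsum
  have : (G.neighborFinset x \ {y}).card - 1 = G.degree x - 2 := by omega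
  rw [this] at hsum
  exact hsum

open scoped Classical in
private lemma side_bound_small {V : Type*} [Fintype V] (G : SimpleGraph V) [DecidableRel G.Adj]
    {S : Finset (Sym2 V)} {u v x y : V} (hadj : G.Adj x y)
    (hqb : ∀ w ∈ G.neighborFinset x \ {y},
      (S.filter (fun f => w ∈ f ∧ u ∉ f ∧ v ∉ f)).card ≤ 1) :
    ∑ w ∈ G.neighborFinset x \ {y}, (S.filter (fun f => w ∈ f ∧ u ∉ f ∧ v ∉ f)).card
      ≤ G.degree x - 1 := by
  classical
  have hsum := Finset.sum_le_card_nsmul (G.neighborFinset x \ {y}) _ 1 hqb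
  rw [smul_eq_mul, mul_one] at hsum
  have hnc := nbr_card G hadj
  omega

open scoped Classical in
private lemma side_bound_one {V : Type*} [Fintype V] (G : SimpleGraph V) [DecidableRel G.Adj]
    {S : Finset (Sym2 V)} (hS : S ⊆ G.edgeFinset) {u v x y : V}
    (hxy : (x = u ∧ y = v) ∨ (x = v ∧ y = u)) (hadj : G.Adj x y)
    (hdx : G.degree x ≤ 2) :
    ∑ w ∈ G.neighborFinset x \ {y}, (S.filter (fun f => w ∈ f ∧ u ∉ f ∧ v ∉ f)).card
      ≤ G.maxDegree - 1 := by
  classical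
  have hx : x = u ∨ x = v := by rcases hxy with ⟨h1, _⟩ | ⟨h1, _⟩ <;> [left; right] <;> exact h1
  have hptw : ∀ w ∈ G.neighborFinset x \ {y},
      (S.filter (fun f => w ∈ f ∧ u ∉ f ∧ v ∉ f)).card ≤ G.maxDegree - 1 := by
    intro w hw
    have hadj' : G.Adj x w :=
      (SimpleGraph.mem_neighborFinset _ _ _).mp (Finset.mem_sdiff.mp hw).1
    have h1 := B_card_bound G hS hx hadj'
    have h2 := G.degree_le_maxDegree w
    omega
  have hsum := Finset.sum_le_card_nsmul (G.neighborFinset x \ {y}) _ _ hptw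
  rw [smul_eq_mul] at hsum
  have hnc := nbr_card G hadj
  have hcard : (G.neighborFinset x \ {y}).card ≤ 1 := by omega
  calc ∑ w ∈ G.neighborFinset x \ {y}, (S.filter (fun f => w ∈ f ∧ u ∉ f ∧ v ∉ f)).card
      ≤ (G.neighborFinset x \ {y}).card * (G.maxDegree - 1) := hsum
    _ ≤ 1 * (G.maxDegree - 1) := Nat.mul_le_mul_right _ hcard
    _ = G.maxDegree - 1 := one_mul _
open scoped Classical in
private lemma degeneracy {V : Type*} [Fintype V] (G : SimpleGraph V) [DecidableRel G.Adj]
    (hforest : (G.induce {v : V | 3 ≤ G.degree v}).IsAcyclic)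
    (S : Finset (Sym2 V)) (hS : S ⊆ G.edgeFinset) (hSne : S.Nonempty) :
    ∃ e ∈ S, (S.filter (fun f => Conf G e f)).card ≤ 4 * G.maxDegree - 4 := by
  classical
  obtain ⟨e0, he0⟩ := hSne
  obtain ⟨u0, v0, hadj0, he0eq⟩ : ∃ u v, G.Adj u v ∧ e0 = s(u,v) := by
    have h := SimpleGraph.mem_edgeFinset.mp (hS he0)
    induction e0 using Sym2.ind with
    | _ a b => exact ⟨a, b, h, rfl⟩
  have hD1 : 1 ≤ G.maxDegree := by
    have h1 : 1 ≤ G.degree u0 := Finset.card_pos.mpr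
      ⟨v0, (SimpleGraph.mem_neighborFinset _ _ _).mpr hadj0⟩
    have := G.degree_le_maxDegree u0
    omega
  by_cases hDsmall : G.maxDegree ≤ 1
  · refine ⟨e0, he0, ?_⟩
    have hempty : S.filter (fun f => Conf G e0 f) = ∅ := by
      rw [Finset.eq_empty_iff_forall_notMem]
      intro f hf
      obtain ⟨hfS, hne, hcase⟩ := Finset.mem_filter.mp hf
      have hfE : f ∈ G.edgeSet := SimpleGraph.mem_edgeFinset.mp (hS hfS)
      have heE : e0 ∈ G.edgeSet := SimpleGraph.mem_edgeFinset.mp (hS he0)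
      rcases hcase with ⟨x, hxe, hxf⟩ | ⟨g, hgE, ⟨x, hxe, hxg⟩, ⟨w, hwg, hwf⟩⟩
      · have h2 := two_edges_degree G heE hfE hne hxe hxf
        have := G.degree_le_maxDegree x; omega
      · rcases eq_or_ne g e0 with rfl | hge
        · have h2 := two_edges_degree G hgE hfE hne hwg hwf
          have := G.degree_le_maxDegree w; omega
        · have h2 := two_edges_degree G heE hgE hge.symm hxe hxg
          have := G.degree_le_maxDegree x; omega
    rw [hempty]
    simp only [Finset.card_empty]
    omega
  push_neg at hDsmall
  have hD2 : 2 ≤ G.maxDegree := hDsmall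
  by_cases hc1 : ∃ u v, G.Adj u v ∧ s(u,v) ∈ S ∧ G.degree u ≤ 2 ∧ G.degree v ≤ 2
  · obtain ⟨u, v, hadj, heS, hdu, hdv⟩ := hc1
    refine ⟨s(u,v), heS, ?_⟩
    have hcov := cover_bound G hS hadj heS
    have huD := inc_card_le G hS u
    have hvD := inc_card_le G hS v
    have hs1 := side_bound_one G hS (u := u) (v := v) (Or.inl ⟨rfl, rfl⟩) hadj hdu
    have hs2 := side_bound_one G hS (u := u) (v := v) (Or.inr ⟨rfl, rfl⟩) hadj.symm hdv
    omega
  by_cases hc2 : ∃ u v, G.Adj u v ∧ s(u,v) ∈ S ∧ G.degree u ≤ 2 ∧ 3 ≤ G.degree v ∧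
      ((Finset.univ.filter (fun x => 3 ≤ G.degree x ∧
        1 ≤ (S.filter (fun f => x ∈ f)).card)).filter (fun y => G.Adj v y)).card ≤ 1
  · obtain ⟨u, v, hadj, heS, hdu, hdv, hbusy⟩ := hc2
    refine ⟨s(u,v), heS, ?_⟩
    have hcov := cover_bound G hS hadj heS
    have huD := inc_card_le G hS u
    have hvD := inc_card_le G hS v
    have hdvD := G.degree_le_maxDegree v
    have hs1 := side_bound_one G hS (u := u) (v := v) (Or.inl ⟨rfl, rfl⟩) hadj hdu
    have hs2 := side_bound G hS (u := u) (v := v) (Or.inr ⟨rfl, rfl⟩) hadj.symm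
      (fun w => 3 ≤ G.degree w ∧ 1 ≤ (S.filter (fun f => w ∈ f)).card) ?_ ?_ hD2
    · omega
    · -- hq1 : busy neighbors of v (other than u) are at most 1
      refine le_trans (Finset.card_le_card ?_) hbusy
      intro w hw
      obtain ⟨hw1, hw2⟩ := Finset.mem_filter.mp hw
      have hadjvw : G.Adj v w :=
        (SimpleGraph.mem_neighborFinset _ _ _).mp (Finset.mem_sdiff.mp hw1).1
      exact Finset.mem_filter.mpr ⟨Finset.mem_filter.mpr ⟨Finset.mem_univ _, hw2⟩, hadjvw⟩
    · -- hqb : non-busy neighbors contribute at most 1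
      intro w hw hnq
      have hadjvw : G.Adj v w :=
        (SimpleGraph.mem_neighborFinset _ _ _).mp (Finset.mem_sdiff.mp hw).1
      rw [not_and_or] at hnq
      rcases hnq with hsmallw | hzero
      · have h1 := B_card_bound G hS (u := u) (v := v) (Or.inr rfl) hadjvw
        omega
      · have h1 := B_le_inc S u v w
        omega
  -- Case 3 : structural case
  set A := Finset.univ.filter (fun x => 3 ≤ G.degree x ∧
    1 ≤ (S.filter (fun f => x ∈ f)).card) with hA
  have hAbig : ∀ x ∈ A, 3 ≤ G.degree x := fun x hx => ((Finset.mem_filter.mp hx).2).1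
  have hLedge : ∀ x, 3 ≤ G.degree x → (A.filter (fun y => G.Adj x y)).card ≤ 1 →
      ∀ f ∈ S, x ∈ f → ∃ p, G.Adj x p ∧ p ∈ A ∧ f = s(x, p) := by
    intro x hxbig hxL f hfS hxf
    obtain ⟨p, hpadj, rfl⟩ := edge_decomp (SimpleGraph.mem_edgeFinset.mp (hS hfS)) hxf
    refine ⟨p, hpadj, ?_, rfl⟩
    have hp1 : 1 ≤ (S.filter (fun f => p ∈ f)).card :=
      Finset.card_pos.mpr ⟨s(x,p), Finset.mem_filter.mpr ⟨hfS, Sym2.mem_mk_right _ _⟩⟩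
    have hpbig : 3 ≤ G.degree p := by
      by_contra hpb
      exact hc2 ⟨p, x, hpadj.symm, by rw [Sym2.eq_swap]; exact hfS, by omega, hxbig, hxL⟩
    exact Finset.mem_filter.mpr ⟨Finset.mem_univ _, hpbig, hp1⟩
  have hLuniq : ∀ x, 3 ≤ G.degree x → (A.filter (fun y => G.Adj x y)).card ≤ 1 →
      ∀ p, G.Adj x p → p ∈ A → ∀ f ∈ S, x ∈ f → f = s(x, p) := by
    intro x hxbig hxL p hpadj hpA f hfS hxf
    obtain ⟨p', hp'adj, hp'A, rfl⟩ := hLedge x hxbig hxL f hfS hxf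
    have : p' = p := Finset.card_le_one.mp hxL _
      (Finset.mem_filter.mpr ⟨hp'A, hp'adj⟩) _ (Finset.mem_filter.mpr ⟨hpA, hpadj⟩)
    rw [this]
  have hu01 : 1 ≤ (S.filter (fun f => u0 ∈ f)).card :=
    Finset.card_pos.mpr ⟨e0, Finset.mem_filter.mpr ⟨he0, by rw [he0eq]; exact Sym2.mem_mk_left _ _⟩⟩
  have hv01 : 1 ≤ (S.filter (fun f => v0 ∈ f)).card :=
    Finset.card_pos.mpr ⟨e0, Finset.mem_filter.mpr ⟨he0, by rw [he0eq]; exact Sym2.mem_mk_right _ _⟩⟩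
  have hAne : A.Nonempty := by
    by_cases h : 3 ≤ G.degree u0
    · exact ⟨u0, Finset.mem_filter.mpr ⟨Finset.mem_univ _, h, hu01⟩⟩
    · have h2 : 3 ≤ G.degree v0 := by
        by_contra h3
        exact hc1 ⟨u0, v0, hadj0, by rw [← he0eq]; exact he0, by omega, by omega⟩
      exact ⟨v0, Finset.mem_filter.mpr ⟨Finset.mem_univ _, h2, hv01⟩⟩
  set AL := A.filter (fun x => ¬((A.filter (fun y => G.Adj x y)).card ≤ 1)) with hAL
  by_cases hALne : AL.Nonempty
  · -- there are non-leaf busy vertices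
    obtain ⟨p, hpAL, hpcard⟩ := big_deg G hforest AL
      (fun x hx => hAbig x (Finset.mem_filter.mp hx).1) hALne
    have hpA : p ∈ A := (Finset.mem_filter.mp hpAL).1
    have hpbig := hAbig p hpA
    have hpL : 2 ≤ (A.filter (fun y => G.Adj p y)).card := by
      have := (Finset.mem_filter.mp hpAL).2
      omega
    have hvex : ∃ v, G.Adj p v ∧ v ∈ A ∧ (A.filter (fun y => G.Adj v y)).card ≤ 1 := by
      by_contra hno
      push_neg at hno
      have hsub : A.filter (fun y => G.Adj p y) ⊆ AL.filter (fun y => G.Adj p y) := by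
        intro w hw
        obtain ⟨hwA, hwadj⟩ := Finset.mem_filter.mp hw
        refine Finset.mem_filter.mpr ⟨Finset.mem_filter.mpr ⟨hwA, ?_⟩, hwadj⟩
        have := hno w hwadj hwA
        omega
      have := Finset.card_le_card hsub
      omega
    obtain ⟨v, hpv, hvA, hvL⟩ := hvex
    have hvbig := hAbig v hvA
    have hadj : G.Adj v p := hpv.symm
    have hv1 : 1 ≤ (S.filter (fun f => v ∈ f)).card := ((Finset.mem_filter.mp hvA).2).2
    obtain ⟨f0, hf0⟩ := Finset.card_pos.mp (by omega :
      0 < (S.filter (fun f => v ∈ f)).card)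
    obtain ⟨hf0S, hvf0⟩ := Finset.mem_filter.mp hf0
    have hfeq : f0 = s(v, p) := hLuniq v hvbig hvL p hadj hpA f0 hf0S hvf0
    have heS : s(v,p) ∈ S := hfeq ▸ hf0S
    refine ⟨s(v,p), heS, ?_⟩
    have hcov := cover_bound G hS hadj heS
    have hincv : (S.filter (fun f => v ∈ f)).card = 1 := by
      have hsub : S.filter (fun f => v ∈ f) ⊆ {s(v,p)} := by
        intro f hf
        obtain ⟨h1, h2⟩ := Finset.mem_filter.mp hf
        exact Finset.mem_singleton.mpr (hLuniq v hvbig hvL p hadj hpA f h1 h2)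
      have := Finset.card_le_card hsub
      rw [Finset.card_singleton] at this
      omega
    have hincp := inc_card_le G hS p
    have hdvD := G.degree_le_maxDegree v
    have hdpD := G.degree_le_maxDegree p
    have hs1 : ∑ w ∈ G.neighborFinset v \ {p},
        (S.filter (fun f => w ∈ f ∧ v ∉ f ∧ p ∉ f)).card ≤ G.degree v - 1 := by
      apply side_bound_small G hadj
      intro w hw
      obtain ⟨hw1, hw2⟩ := Finset.mem_sdiff.mp hw
      have hadjvw : G.Adj v w := (SimpleGraph.mem_neighborFinset _ _ _).mp hw1
      have hwnep : w ≠ p := by simpa using hw2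
      by_cases hwbig : 3 ≤ G.degree w
      · by_cases hwinc : 1 ≤ (S.filter (fun f => w ∈ f)).card
        · -- w would be a second busy neighbor of v
          exfalso
          have hwA : w ∈ A := Finset.mem_filter.mpr ⟨Finset.mem_univ _, hwbig, hwinc⟩
          have : w = p := Finset.card_le_one.mp hvL _
            (Finset.mem_filter.mpr ⟨hwA, hadjvw⟩) _ (Finset.mem_filter.mpr ⟨hpA, hadj⟩)
          exact hwnep this
        · have h1 := B_le_inc S v p w
          omega
      · have h1 := B_card_bound G hS (u := v) (v := p) (Or.inl rfl) hadjvw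
        omega
    have hs2 := side_bound G hS (u := v) (v := p) (Or.inr ⟨rfl, rfl⟩) hadj.symm
      (fun w => w ∈ AL) ?_ ?_ hD2
    · omega
    · -- at most one AL-neighbor of p among its neighbors
      refine le_trans (Finset.card_le_card ?_) hpcard
      intro w hw
      obtain ⟨hw1, hw2⟩ := Finset.mem_filter.mp hw
      have hadjpw : G.Adj p w :=
        (SimpleGraph.mem_neighborFinset _ _ _).mp (Finset.mem_sdiff.mp hw1).1
      exact Finset.mem_filter.mpr ⟨hw2, hadjpw⟩
    · -- non-AL neighbors of p contribute at most 1
      intro w hw hnq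
      obtain ⟨hw1, hw2⟩ := Finset.mem_sdiff.mp hw
      have hadjpw : G.Adj p w := (SimpleGraph.mem_neighborFinset _ _ _).mp hw1
      have hwnev : w ≠ v := by simpa using hw2
      by_cases hwbig : 3 ≤ G.degree w
      · by_cases hwinc : 1 ≤ (S.filter (fun f => w ∈ f)).card
        · -- w ∈ A but not in AL, so w is a leaf; its only edge goes to p
          have hwA : w ∈ A := Finset.mem_filter.mpr ⟨Finset.mem_univ _, hwbig, hwinc⟩
          have hwL : (A.filter (fun y => G.Adj w y)).card ≤ 1 := by
            by_contra hc
            exact hnq (Finset.mem_filter.mpr ⟨hwA, hc⟩)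
          have hempty : S.filter (fun f => w ∈ f ∧ v ∉ f ∧ p ∉ f) = ∅ := by
            rw [Finset.eq_empty_iff_forall_notMem]
            intro f hf
            obtain ⟨hfS, hwf, _, hpf⟩ := Finset.mem_filter.mp hf
            have := hLuniq w hwbig hwL p hadjpw.symm hpA f hfS hwf
            rw [this] at hpf
            exact hpf (Sym2.mem_mk_right _ _)
          rw [hempty]
          simp
        · have h1 := B_le_inc S v p w
          omega
      · have h1 := B_card_bound G hS (u := v) (v := p) (Or.inr rfl) hadjpw
        omega
  · -- all busy vertices are leaves
    obtain ⟨v, hvA⟩ := hAne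
    have hvbig := hAbig v hvA
    have hleaf : ∀ x ∈ A, (A.filter (fun y => G.Adj x y)).card ≤ 1 := by
      intro x hx
      by_contra hc
      exact hALne ⟨x, Finset.mem_filter.mpr ⟨hx, hc⟩⟩
    have hvL := hleaf v hvA
    have hv1 : 1 ≤ (S.filter (fun f => v ∈ f)).card := ((Finset.mem_filter.mp hvA).2).2
    obtain ⟨f0, hf0⟩ := Finset.card_pos.mp (by omega :
      0 < (S.filter (fun f => v ∈ f)).card)
    obtain ⟨hf0S, hvf0⟩ := Finset.mem_filter.mp hf0
    obtain ⟨p, hadj, hpA, hfeq⟩ := hLedge v hvbig hvL f0 hf0S hvf0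
    have hpbig := hAbig p hpA
    have hpL := hleaf p hpA
    have heS : s(v,p) ∈ S := hfeq ▸ hf0S
    refine ⟨s(v,p), heS, ?_⟩
    have hcov := cover_bound G hS hadj heS
    have hincv : (S.filter (fun f => v ∈ f)).card = 1 := by
      have hsub : S.filter (fun f => v ∈ f) ⊆ {s(v,p)} := by
        intro f hf
        obtain ⟨h1, h2⟩ := Finset.mem_filter.mp hf
        exact Finset.mem_singleton.mpr (hLuniq v hvbig hvL p hadj hpA f h1 h2)
      have := Finset.card_le_card hsub
      rw [Finset.card_singleton] at this
      omega
    have hincp : (S.filter (fun f => p ∈ f)).card = 1 := by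
      have hp1 : 1 ≤ (S.filter (fun f => p ∈ f)).card := ((Finset.mem_filter.mp hpA).2).2
      have hsub : S.filter (fun f => p ∈ f) ⊆ {s(p,v)} := by
        intro f hf
        obtain ⟨h1, h2⟩ := Finset.mem_filter.mp hf
        exact Finset.mem_singleton.mpr (hLuniq p hpbig hpL v hadj.symm hvA f h1 h2)
      have := Finset.card_le_card hsub
      rw [Finset.card_singleton] at this
      omega
    have hdvD := G.degree_le_maxDegree v
    have hdpD := G.degree_le_maxDegree p
    have hs1 : ∑ w ∈ G.neighborFinset v \ {p},
        (S.filter (fun f => w ∈ f ∧ v ∉ f ∧ p ∉ f)).card ≤ G.degree v - 1 := by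
      apply side_bound_small G hadj
      intro w hw
      obtain ⟨hw1, hw2⟩ := Finset.mem_sdiff.mp hw
      have hadjvw : G.Adj v w := (SimpleGraph.mem_neighborFinset _ _ _).mp hw1
      have hwnep : w ≠ p := by simpa using hw2
      by_cases hwbig : 3 ≤ G.degree w
      · by_cases hwinc : 1 ≤ (S.filter (fun f => w ∈ f)).card
        · exfalso
          have hwA : w ∈ A := Finset.mem_filter.mpr ⟨Finset.mem_univ _, hwbig, hwinc⟩
          have : w = p := Finset.card_le_one.mp hvL _
            (Finset.mem_filter.mpr ⟨hwA, hadjvw⟩) _ (Finset.mem_filter.mpr ⟨hpA, hadj⟩)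
          exact hwnep this
        · have h1 := B_le_inc S v p w
          omega
      · have h1 := B_card_bound G hS (u := v) (v := p) (Or.inl rfl) hadjvw
        omega
    have hs2 : ∑ w ∈ G.neighborFinset p \ {v},
        (S.filter (fun f => w ∈ f ∧ v ∉ f ∧ p ∉ f)).card ≤ G.degree p - 1 := by
      apply side_bound_small G hadj.symm
      intro w hw
      obtain ⟨hw1, hw2⟩ := Finset.mem_sdiff.mp hw
      have hadjpw : G.Adj p w := (SimpleGraph.mem_neighborFinset _ _ _).mp hw1
      have hwnev : w ≠ v := by simpa using hw2
      by_cases hwbig : 3 ≤ G.degree w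
      · by_cases hwinc : 1 ≤ (S.filter (fun f => w ∈ f)).card
        · exfalso
          have hwA : w ∈ A := Finset.mem_filter.mpr ⟨Finset.mem_univ _, hwbig, hwinc⟩
          have : w = v := Finset.card_le_one.mp hpL _
            (Finset.mem_filter.mpr ⟨hwA, hadjpw⟩) _ (Finset.mem_filter.mpr ⟨hvA, hadj.symm⟩)
          exact hwnev this
        · have h1 := B_le_inc S v p w
          omega
      · have h1 := B_card_bound G hS (u := v) (v := p) (Or.inr rfl) hadjpw
        omega
    omega
private lemma arith_aux (D : ℕ) (h : 1 ≤ D) : 4 * D - 4 + 1 ≤ 4 * D - 3 := by omega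

theorem strong_chromatic_index_of_big_vertices_forest {V : Type*} [Fintype V]
    (G : SimpleGraph V) [DecidableRel G.Adj]
    (hforest : (G.induce {v : V | 3 ≤ G.degree v}).IsAcyclic) :
    G.strongChromaticIndex ≤ 4 * G.maxDegree - 3 := by
  classical
  by_cases hE : G.edgeFinset = ∅
  · have h0 : (0 : ℕ) ∈ {n | ∃ C : Sym2 V → ℕ, (∀ e ∈ G.edgeSet, C e < n) ∧
        G.IsStrongEdgeColoring C} := by
      refine ⟨fun _ => 0, ?_, ?_⟩
      · intro e he
        exact absurd (SimpleGraph.mem_edgeFinset.mpr he) (by simp [hE])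
      · intro e he
        exact absurd (SimpleGraph.mem_edgeFinset.mpr he) (by simp [hE])
    exact le_trans (Nat.sInf_le h0) (Nat.zero_le _)
  · have hSne : G.edgeFinset.Nonempty := Finset.nonempty_of_ne_empty hE
    have hD1 : 1 ≤ G.maxDegree := by
      obtain ⟨e, he⟩ := hSne
      obtain ⟨u, v, hadj, heq⟩ : ∃ u v, G.Adj u v ∧ e = s(u,v) := by
        have h := SimpleGraph.mem_edgeFinset.mp he
        induction e using Sym2.ind with
        | _ a b => exact ⟨a, b, h, rfl⟩
      have h1 : 1 ≤ G.degree u := Finset.card_pos.mpr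
        ⟨v, (SimpleGraph.mem_neighborFinset _ _ _).mpr hadj⟩
      have := G.degree_le_maxDegree u
      omega
    obtain ⟨C, hC1, hC2⟩ := greedy G (4 * G.maxDegree - 4)
      (degeneracy G hforest) G.edgeFinset (Finset.Subset.refl _)
    have hmem : (4 * G.maxDegree - 4 + 1) ∈ {n | ∃ C : Sym2 V → ℕ,
        (∀ e ∈ G.edgeSet, C e < n) ∧ G.IsStrongEdgeColoring C} := by
      refine ⟨C, ?_, ?_⟩
      · intro e he
        exact hC1 e (SimpleGraph.mem_edgeFinset.mpr he)
      · intro e he f hf hne hcase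
        exact hC2 e (SimpleGraph.mem_edgeFinset.mpr he) f
          (SimpleGraph.mem_edgeFinset.mpr hf) ⟨hne, hcase⟩
    have hle := Nat.sInf_le hmem
    exact le_trans hle (arith_aux G.maxDegree hD1)
end

section
/- If G is a minimally 2-connected simple graph, then the minimum degree of G is two, and the subgraph of G induced by the vertices of degree at least 3 is a forest (has no cycles). -/
/-- A graph is 2-connected if it has at least 3 vertices and deleting any
single vertex leaves a connected graph. -/
def SimpleGraph.TwoConnected {V : Type*} [Fintype V] (G : SimpleGraph V) : Prop :=
  3 ≤ Fintype.card V ∧ ∀ v : V, (G.induce {u | u ≠ v}).Connected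

/-- A graph is minimally 2-connected if it is 2-connected but deleting any
edge destroys 2-connectedness. -/
def SimpleGraph.MinimallyTwoConnected {V : Type*} [Fintype V]
    (G : SimpleGraph V) : Prop :=
  G.TwoConnected ∧ ∀ e ∈ G.edgeSet, ¬ (G.deleteEdges {e}).TwoConnected

/-!
For an edge `pq` of a minimally 2-connected graph `G`, the graph `G - pq` has a cut vertex `u`, so
`p` and `q` lie in different components `P ∋ p` and `Q ∋ q` of `G - u - pq`. Suppose every vertex
of a cycle `C` has degree at least 3, and choose such a separation of an edge `pq` of `C` with `P`
minimal. Then `u` lies on `C`, it has a `C`-neighbour `α ∈ P` and a neighbour `β ∈ Q`, and some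
vertex `μ` separates the edge `αu` in the same way. If `μ ∈ P`, the `α`-side of `G - μ - αu` lies
strictly inside `P`. If `μ ∈ Q`, then `α` is the only neighbour of `u` in `P`; hence `p ≠ α` (a
third neighbour of `p` would reach `u` inside `P` in `G - p`), and the `α`-side of `G - p - αu`
lies strictly inside `P`. Either way `P` was not minimal, so every cycle has a vertex of degree 2.
This makes the 3⁺-vertices induce a forest. If `δ(G) ≥ 3`, the connected graph `G` is not a tree,
and any of its cycles is a counterexample; so `δ(G) = 2`, as 2-connectedness gives `δ(G) ≥ 2`.
-/

theorem Finset.exists_mem_ne_ne {α : Type*} [DecidableEq α] {s : Finset α} (hs : 3 ≤ s.card)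
    (a b : α) : ∃ c ∈ s, c ≠ a ∧ c ≠ b := by
  obtain ⟨c, hc, hab⟩ := Finset.exists_mem_notMem_of_card_lt_card (s := {a, b}) (t := s)
    (Finset.card_le_two.trans_lt (by omega))
  simp only [Finset.mem_insert, Finset.mem_singleton, not_or] at hab
  exact ⟨c, hc, hab⟩

namespace SimpleGraph

variable {V : Type*} {G H : SimpleGraph V} {a b c p q r u v z α β μ : V} {e f : Sym2 V}

section Reachability

theorem Reachable.mem_of_forall_adj {S : Set V} (h : G.Reachable a b) (ha : a ∈ S)
    (hS : ∀ ⦃w c⦄, G.Reachable a w → w ∈ S → G.Adj w c → c ∈ S) : b ∈ S := by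
  rw [reachable_iff_reflTransGen] at h
  induction h with
  | refl => exact ha
  | tail haw hwc ih => exact hS ((reachable_iff_reflTransGen _ _).mpr haw) ih hwc

theorem Reachable.mono_of_forall_adj (h : G.Reachable a b)
    (hGH : ∀ ⦃w c⦄, G.Reachable a w → G.Adj w c → H.Adj w c) : H.Reachable a b :=
  h.mem_of_forall_adj (S := {z | H.Reachable a z}) .rfl
    fun _ _ haw hw hwc => hw.trans (hGH haw hwc).reachable

theorem Reachable.reachable_deleteEdges_or (h : G.Reachable p a) :
    (G.deleteEdges {s(p, q)}).Reachable p a ∨ (G.deleteEdges {s(p, q)}).Reachable q a := by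
  refine h.mem_of_forall_adj (S := {z | _ ∨ _}) (Or.inl .rfl) fun w c _ hw hwc => ?_
  by_cases hpq : s(w, c) = s(p, q)
  · rcases Sym2.eq_iff.mp hpq with ⟨-, rfl⟩ | ⟨-, rfl⟩
    · exact Or.inr .rfl
    · exact Or.inl .rfl
  · have hwc' : (G.deleteEdges {s(p, q)}).Adj w c := by simpa [hwc] using hpq
    exact hw.imp (·.trans hwc'.reachable) (·.trans hwc'.reachable)

theorem Reachable.deleteEdges_of_reachable (h : G.Reachable a b)
    (hpq : (G.deleteEdges {s(p, q)}).Reachable p q) :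
    (G.deleteEdges {s(p, q)}).Reachable a b := by
  refine h.mem_of_forall_adj (S := {z | (G.deleteEdges {s(p, q)}).Reachable a z}) .rfl
    fun w c _ hw hwc => hw.trans ?_
  by_cases he : s(w, c) = s(p, q)
  · rcases Sym2.eq_iff.mp he with ⟨rfl, rfl⟩ | ⟨rfl, rfl⟩
    · exact hpq
    · exact hpq.symm
  · exact Adj.reachable (by simpa [hwc] using he)

theorem eq_of_reachable_deleteIncidenceSet (h : (G.deleteIncidenceSet v).Reachable v a) :
    a = v :=
  h.mem_of_forall_adj (S := {v}) rfl fun _ _ _ hw hwc => by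
    simp_all [deleteIncidenceSet_adj]

theorem reachable_induce_setOf_ne_iff {a b : ({u | u ≠ v} : Set V)} :
    (G.induce {u | u ≠ v}).Reachable a b ↔ (G.deleteIncidenceSet v).Reachable a b := by
  classical
  refine ⟨fun h => h.map ⟨Subtype.val, fun {x y} hxy => ?_⟩, fun ⟨W⟩ => ?_⟩
  · exact deleteIncidenceSet_adj.mpr ⟨hxy, x.2, y.2⟩
  · have hW : ∀ x ∈ W.support, x ≠ v := by
      rintro x hx rfl
      exact a.2 (eq_of_reachable_deleteIncidenceSet ⟨(W.takeUntil x hx).reverse⟩)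
    let W' := W.transfer G fun e he =>
      edgeSet_mono (deleteIncidenceSet_le G v) (W.edges_subset_edgeSet he)
    exact ⟨W'.induce {u | u ≠ v} (by simpa [W', Walk.support_transfer] using hW)⟩

end Reachability

section DeleteVertEdge

/-- `G - v - e`, with `v` kept as an isolated vertex. -/
def deleteVertEdge (G : SimpleGraph V) (v : V) (e : Sym2 V) : SimpleGraph V :=
  (G.deleteIncidenceSet v).deleteEdges {e}

@[simp]
theorem deleteVertEdge_adj :
    (G.deleteVertEdge v e).Adj a b ↔ G.Adj a b ∧ a ≠ v ∧ b ≠ v ∧ s(a, b) ≠ e := by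
  simp [deleteVertEdge, deleteIncidenceSet_adj, and_assoc]

theorem deleteIncidenceSet_deleteEdges :
    (G.deleteEdges {e}).deleteIncidenceSet v = G.deleteVertEdge v e := by
  ext a b
  simp only [deleteIncidenceSet_adj, deleteEdges_adj, Set.mem_singleton_iff, deleteVertEdge]
  tauto

theorem deleteVertEdge_eq_of_mem (hv : v ∈ e) :
    G.deleteVertEdge v e = G.deleteIncidenceSet v := by
  ext a b
  simp only [deleteVertEdge_adj, deleteIncidenceSet_adj]
  refine ⟨fun h => ⟨h.1, h.2.1, h.2.2.1⟩, fun h => ⟨h.1, h.2.1, h.2.2, ?_⟩⟩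
  rintro rfl
  rcases Sym2.mem_iff.mp hv with rfl | rfl
  exacts [h.2.1 rfl, h.2.2 rfl]

theorem eq_of_reachable_deleteVertEdge (h : (G.deleteVertEdge v e).Reachable v a) : a = v :=
  eq_of_reachable_deleteIncidenceSet (h.mono (deleteEdges_le _))

theorem Reachable.deleteVertEdge_of_forall_ne (h : (G.deleteVertEdge u e).Reachable a b)
    (hμ : ∀ z, (G.deleteVertEdge u e).Reachable a z → z ≠ μ) (hu : u ∈ f) :
    (G.deleteVertEdge μ f).Reachable a b := by
  refine h.mono_of_forall_adj fun w c haw hwc => ?_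
  obtain ⟨hwc', hwu, hcu, -⟩ := deleteVertEdge_adj.mp hwc
  refine deleteVertEdge_adj.mpr ⟨hwc', hμ w haw, hμ c (haw.trans hwc.reachable), ?_⟩
  rintro rfl
  rcases Sym2.mem_iff.mp hu with rfl | rfl
  exacts [hwu rfl, hcu rfl]

end DeleteVertEdge

section TwoConnected

variable [Fintype V]

theorem twoConnected_iff : G.TwoConnected ↔ 3 ≤ Fintype.card V ∧
    ∀ v a b, a ≠ v → b ≠ v → (G.deleteIncidenceSet v).Reachable a b := by
  refine and_congr_right fun hcard => forall_congr' fun v => ?_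
  classical
  obtain ⟨a, -, hav, -⟩ := Finset.exists_mem_ne_ne (s := Finset.univ) hcard v v
  have : Nonempty ({u | u ≠ v} : Set V) := ⟨⟨a, hav⟩⟩
  simp only [connected_iff, this, and_true, Preconnected, Subtype.forall,
    reachable_induce_setOf_ne_iff]
  exact ⟨fun h a b ha hb => h a ha b hb, fun h a ha b hb => h a b ha hb⟩

theorem TwoConnected.reachable (hG : G.TwoConnected) (ha : a ≠ v) (hb : b ≠ v) :
    (G.deleteIncidenceSet v).Reachable a b :=
  (twoConnected_iff.mp hG).2 v a b ha hb

theorem TwoConnected.exists_ne_ne (hG : G.TwoConnected) (a b : V) : ∃ c, c ≠ a ∧ c ≠ b := by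
  classical
  obtain ⟨c, -, hc⟩ := Finset.exists_mem_ne_ne (s := Finset.univ) hG.1 a b
  exact ⟨c, hc⟩

theorem TwoConnected.connected (hG : G.TwoConnected) : G.Connected := by
  have : Nonempty V := Fintype.card_pos_iff.mp (by have := hG.1; omega)
  refine (connected_iff G).mpr ⟨fun a b => ?_, this⟩
  obtain ⟨c, hca, hcb⟩ := hG.exists_ne_ne a b
  exact (hG.reachable hca.symm hcb.symm).mono (deleteIncidenceSet_le G c)

theorem TwoConnected.exists_adj_ne (hG : G.TwoConnected) (huv : u ≠ v) :
    ∃ c, G.Adj u c ∧ c ≠ v := by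
  obtain ⟨b, hbu, hbv⟩ := hG.exists_ne_ne u v
  obtain ⟨W⟩ := hG.reachable huv hbv
  obtain ⟨hadj, -, hne⟩ := deleteIncidenceSet_adj.mp (W.adj_snd (W.not_nil_of_ne hbu.symm))
  exact ⟨_, hadj, hne⟩

theorem TwoConnected.two_le_degree [DecidableRel G.Adj] (hG : G.TwoConnected) (v : V) :
    2 ≤ G.degree v := by
  obtain ⟨w, hwv, -⟩ := hG.exists_ne_ne v v
  obtain ⟨c, hc, -⟩ := hG.exists_adj_ne hwv.symm
  obtain ⟨d, hd, hdc⟩ := hG.exists_adj_ne hc.ne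
  rw [← card_neighborFinset_eq_degree]
  exact Finset.one_lt_card.mpr ⟨d, by simpa using hd, c, by simpa using hc, hdc⟩

theorem MinimallyTwoConnected.exists_not_reachable_deleteVertEdge
    (hG : G.MinimallyTwoConnected) (hpq : G.Adj p q) :
    ∃ u, u ≠ p ∧ u ≠ q ∧ ¬ (G.deleteVertEdge u s(p, q)).Reachable p q := by
  obtain ⟨u, a, b, hau, hbu, hab⟩ :
      ∃ u a b, a ≠ u ∧ b ≠ u ∧ ¬ (G.deleteVertEdge u s(p, q)).Reachable a b := by
    simpa [twoConnected_iff, hG.1.1, deleteIncidenceSet_deleteEdges] using hG.2 s(p, q) hpq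
  have hGu := hG.1.reachable hau hbu
  refine ⟨u, ?_, ?_, fun hr => hab (hGu.deleteEdges_of_reachable hr)⟩
  · rintro rfl
    exact hab (by rwa [deleteVertEdge_eq_of_mem (Sym2.mem_mk_left _ _)])
  · rintro rfl
    exact hab (by rwa [deleteVertEdge_eq_of_mem (Sym2.mem_mk_right _ _)])

end TwoConnected

namespace Walk

theorem IsCycle.mem_support_of_not_reachable_deleteVertEdge {C : G.Walk v v} (hC : C.IsCycle)
    (he : s(p, q) ∈ C.edges) (h : ¬ (G.deleteVertEdge u s(p, q)).Reachable p q) :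
    u ∈ C.support := by
  by_contra hu
  have hCu : ∀ e ∈ C.edges, e ∈ (G.deleteIncidenceSet u).edgeSet := fun e he' => by
    rw [edgeSet_deleteIncidenceSet]
    exact ⟨C.edges_subset_edgeSet he', fun hinc => hu (mem_support_of_mem_edges he' hinc.2)⟩
  refine h (adj_and_reachable_delete_edges_iff_exists_cycle.mpr
    ⟨v, C.transfer _ hCu, hC.transfer hCu, ?_⟩).2
  rwa [edges_transfer]

theorem exists_mem_edges_reachable_deleteVertEdge :
    ∀ {a : V} (W : G.Walk a u), a ≠ u → e ∉ W.edges →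
      ∃ α, s(α, u) ∈ W.edges ∧ (G.deleteVertEdge u e).Reachable a α
  | _, nil, hau, _ => absurd rfl hau
  | a, cons (v := c) hac W, hau, he => by
    rw [edges_cons, List.mem_cons, not_or] at he
    by_cases hcu : c = u
    · subst hcu
      exact ⟨a, List.mem_cons_self .., .rfl⟩
    obtain ⟨α, hα, hcα⟩ := exists_mem_edges_reachable_deleteVertEdge W hcu he.2
    have hac' : (G.deleteVertEdge u e).Adj a c :=
      deleteVertEdge_adj.mpr ⟨hac, hau, hcu, Ne.symm he.1⟩
    exact ⟨α, List.mem_cons_of_mem _ hα, hac'.reachable.trans hcα⟩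

theorem IsTrail.exists_mem_edges_reachable_deleteVertEdge [DecidableEq V] {D : G.Walk u u}
    (hD : D.IsTrail) (hp : p ∈ D.support) (hpu : p ≠ u) (e : Sym2 V) :
    ∃ α, s(α, u) ∈ D.edges ∧ (G.deleteVertEdge u e).Reachable p α := by
  by_cases he : e ∈ (D.dropUntil p hp).edges
  · have he' : e ∉ (D.takeUntil p hp).reverse.edges := by
      rw [edges_reverse, List.mem_reverse]
      exact fun h => hD.disjoint_edges_takeUntil_dropUntil hp h he
    obtain ⟨α, hα, hpα⟩ := Walk.exists_mem_edges_reachable_deleteVertEdge _ hpu he'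
    rw [edges_reverse, List.mem_reverse] at hα
    exact ⟨α, D.edges_takeUntil_subset_edges hp hα, hpα⟩
  · obtain ⟨α, hα, hpα⟩ := Walk.exists_mem_edges_reachable_deleteVertEdge _ hpu he
    exact ⟨α, D.edges_dropUntil_subset_edges hp hα, hpα⟩

theorem IsCycle.exists_mem_edges_reachable_deleteVertEdge {C : G.Walk v v} (hC : C.IsCycle)
    (hu : u ∈ C.support) (hpq : s(p, q) ∈ C.edges) (hpu : p ≠ u) (e : Sym2 V) :
    ∃ α, s(α, u) ∈ C.edges ∧ (G.deleteVertEdge u e).Reachable p α := by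
  classical
  have hrot := C.rotate_edges u hu
  have hp : p ∈ (C.rotate u hu).support :=
    fst_mem_support_of_mem_edges _ (hrot.mem_iff.mpr hpq)
  obtain ⟨α, hα, hpα⟩ :=
    (hC.rotate hu).isTrail.exists_mem_edges_reachable_deleteVertEdge hp hpu e
  exact ⟨α, hrot.mem_iff.mp hα, hpα⟩

end Walk

section Separation

theorem ssubset_of_reachable_separation
    (hsep : ¬ (G.deleteVertEdge u s(p, q)).Reachable p q)
    (hα : (G.deleteVertEdge u s(p, q)).Reachable p α)
    (hβ : (G.deleteVertEdge u s(p, q)).Reachable q β) (hβu : G.Adj β u)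
    (hμ : (G.deleteVertEdge u s(p, q)).Reachable p μ) (hμα : μ ≠ α) (hμu : μ ≠ u)
    (hsep' : ¬ (G.deleteVertEdge μ s(α, u)).Reachable α u) :
    {z | (G.deleteVertEdge μ s(α, u)).Reachable α z} ⊂
      {z | (G.deleteVertEdge u s(p, q)).Reachable p z} := by
  have hQμ : ∀ z, (G.deleteVertEdge u s(p, q)).Reachable q z → z ≠ μ := by
    rintro z hz rfl
    exact hsep (hμ.trans hz.symm)
  have hβ' := hβ.deleteVertEdge_of_forall_ne hQμ (Sym2.mem_mk_right α u)
  have hβα : β ≠ α := by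
    rintro rfl
    exact hsep (hα.trans hβ.symm)
  have hβu' : (G.deleteVertEdge μ s(α, u)).Adj β u :=
    deleteVertEdge_adj.mpr ⟨hβu, hQμ β hβ, hμu.symm, mt Sym2.congr_left.mp hβα⟩
  have hq : ¬ (G.deleteVertEdge μ s(α, u)).Reachable α q := fun h =>
    hsep' (h.trans (hβ'.trans hβu'.reachable))
  refine (Set.ssubset_iff_of_subset fun z hz => ?_).mpr
    ⟨μ, hμ, fun h => hμα (eq_of_reachable_deleteVertEdge h.symm).symm⟩
  refine Reachable.mem_of_forall_adj (S := {x | (G.deleteVertEdge u s(p, q)).Reachable p x})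
    hz hα fun w c hαw hw hwc => ?_
  obtain ⟨hwc', -, -, -⟩ := deleteVertEdge_adj.mp hwc
  have hwu : w ≠ u := by
    rintro rfl
    exact hsep' hαw
  have hcu : c ≠ u := by
    rintro rfl
    exact hsep' (hαw.trans hwc.reachable)
  by_cases hpq : s(w, c) = s(p, q)
  · rcases Sym2.eq_iff.mp hpq with ⟨-, rfl⟩ | ⟨-, rfl⟩
    · exact (hq (hαw.trans hwc.reachable)).elim
    · exact .rfl
  · exact hw.trans (deleteVertEdge_adj.mpr ⟨hwc', hwu, hcu, hpq⟩).reachable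

theorem eq_of_adj_of_reachable_separation
    (hsep : ¬ (G.deleteVertEdge u s(p, q)).Reachable p q)
    (hα : (G.deleteVertEdge u s(p, q)).Reachable p α)
    (hμ : (G.deleteVertEdge u s(p, q)).Reachable q μ) (hμu : μ ≠ u)
    (hsep' : ¬ (G.deleteVertEdge μ s(α, u)).Reachable α u)
    (hcu : G.Adj c u) (hc : (G.deleteVertEdge u s(p, q)).Reachable p c) : c = α := by
  by_contra hcα
  have hPμ : ∀ z, (G.deleteVertEdge u s(p, q)).Reachable α z → z ≠ μ := by
    rintro z hz rfl
    exact hsep ((hα.trans hz).trans hμ.symm)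
  have hαc := (hα.symm.trans hc).deleteVertEdge_of_forall_ne hPμ (Sym2.mem_mk_right α u)
  have hcu' : (G.deleteVertEdge μ s(α, u)).Adj c u :=
    deleteVertEdge_adj.mpr
      ⟨hcu, hPμ c (hα.symm.trans hc), hμu.symm, mt Sym2.congr_left.mp hcα⟩
  exact hsep' (hαc.trans hcu'.reachable)

theorem Reachable.reachable_of_deleteVertEdge_separation
    (hfac : ∀ c, G.Adj c u → (G.deleteVertEdge u s(p, q)).Reachable p c → c = α)
    (hr : (G.deleteVertEdge u s(p, q)).Reachable p r)
    (h : (G.deleteVertEdge p s(α, u)).Reachable r z) :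
    (G.deleteVertEdge u s(p, q)).Reachable p z := by
  refine h.mem_of_forall_adj (S := {x | (G.deleteVertEdge u s(p, q)).Reachable p x}) hr
    fun w c _ hw hwc => ?_
  obtain ⟨hwc', hwp, hcp, hne⟩ := deleteVertEdge_adj.mp hwc
  have hwu : w ≠ u := by
    rintro rfl
    exact hwp (eq_of_reachable_deleteVertEdge hw.symm).symm
  have hcu : c ≠ u := by
    rintro rfl
    exact hne (by rw [hfac w hwc' hw])
  have hpq : s(w, c) ≠ s(p, q) := by
    rintro h
    rcases Sym2.eq_iff.mp h with ⟨rfl, -⟩ | ⟨-, rfl⟩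
    exacts [hwp rfl, hcp rfl]
  exact hw.trans (deleteVertEdge_adj.mpr ⟨hwc', hwu, hcu, hpq⟩).reachable

variable [Fintype V] [DecidableRel G.Adj]

theorem exists_adj_ne_ne_of_three_le_degree (h : 3 ≤ G.degree p) (a b : V) :
    ∃ r, G.Adj p r ∧ r ≠ a ∧ r ≠ b := by
  classical
  obtain ⟨r, hr, hra, hrb⟩ := Finset.exists_mem_ne_ne (s := G.neighborFinset p) (by simpa) a b
  exact ⟨r, (mem_neighborFinset _ _ _).mp hr, hra, hrb⟩

theorem MinimallyTwoConnected.exists_reachable_ssubset (hG : G.MinimallyTwoConnected)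
    {C : G.Walk v v} (hC : C.IsCycle) (hpq : s(p, q) ∈ C.edges) (hp : 3 ≤ G.degree p)
    (hup : u ≠ p) (huq : u ≠ q) (hsep : ¬ (G.deleteVertEdge u s(p, q)).Reachable p q) :
    ∃ a b w, s(a, b) ∈ C.edges ∧ w ≠ a ∧ w ≠ b ∧
      ¬ (G.deleteVertEdge w s(a, b)).Reachable a b ∧
      {z | (G.deleteVertEdge w s(a, b)).Reachable a z} ⊂
        {z | (G.deleteVertEdge u s(p, q)).Reachable p z} := by
  have huC := hC.mem_support_of_not_reachable_deleteVertEdge hpq hsep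
  obtain ⟨α, hαC, hα⟩ :=
    hC.exists_mem_edges_reachable_deleteVertEdge huC hpq hup.symm s(p, q)
  obtain ⟨β, hβC, hβ⟩ := hC.exists_mem_edges_reachable_deleteVertEdge huC
    (Sym2.eq_swap ▸ hpq) huq.symm s(p, q)
  obtain ⟨μ, hμα, hμu, hsep'⟩ :=
    hG.exists_not_reachable_deleteVertEdge (C.adj_of_mem_edges hαC)
  rcases (hG.1.reachable hup.symm hμu).reachable_deleteEdges_or (q := q) with hμ | hμ
  · exact ⟨α, u, μ, hαC, hμα, hμu, hsep', ssubset_of_reachable_separation hsep hα hβ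
      (C.adj_of_mem_edges hβC) hμ hμα hμu hsep'⟩
  have hfac c := eq_of_adj_of_reachable_separation (c := c) hsep hα hμ hμu hsep'
  by_cases hpα : p = α
  · subst hpα
    obtain ⟨r, hpr, hrq, hru⟩ := exists_adj_ne_ne_of_three_le_degree hp q u
    have hr : (G.deleteVertEdge u s(p, q)).Reachable p r :=
      (deleteVertEdge_adj.mpr ⟨hpr, hup.symm, hru, mt Sym2.congr_right.mp hrq⟩).reachable
    have hru' := hG.1.reachable hpr.ne' hup
    rw [← deleteVertEdge_eq_of_mem (Sym2.mem_mk_left p u)] at hru'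
    exact (hup (eq_of_reachable_deleteVertEdge
      (hr.reachable_of_deleteVertEdge_separation hfac hru').symm).symm).elim
  refine ⟨α, u, p, hαC, hpα, hup.symm, fun h => ?_,
    (Set.ssubset_iff_of_subset fun z hz => ?_).mpr
      ⟨p, .rfl, fun h => hpα (eq_of_reachable_deleteVertEdge h.symm).symm⟩⟩
  · exact hup (eq_of_reachable_deleteVertEdge
      (hα.reachable_of_deleteVertEdge_separation hfac h).symm).symm
  · exact hα.reachable_of_deleteVertEdge_separation hfac hz

theorem MinimallyTwoConnected.exists_degree_lt_three_of_isCycle (hG : G.MinimallyTwoConnected)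
    {C : G.Walk v v} (hC : C.IsCycle) : ∃ x ∈ C.support, G.degree x < 3 := by
  by_contra! hdeg
  let S : Set (Set V) := {F | ∃ p q u, s(p, q) ∈ C.edges ∧ u ≠ p ∧ u ≠ q ∧
    ¬ (G.deleteVertEdge u s(p, q)).Reachable p q ∧
    F = {z | (G.deleteVertEdge u s(p, q)).Reachable p z}}
  have hS : S.Nonempty := by
    cases C with
    | nil => exact (hC.not_nil .nil).elim
    | cons hvc W =>
      obtain ⟨u, hu⟩ := hG.exists_not_reachable_deleteVertEdge hvc
      exact ⟨_, _, _, u, List.mem_cons_self .., hu.1, hu.2.1, hu.2.2, rfl⟩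
  obtain ⟨F, ⟨p, q, u, hpq, hup, huq, hsep, rfl⟩, hmin⟩ := wellFounded_lt.has_min S hS
  obtain ⟨a, b, w, hab, hwa, hwb, hsep', hlt⟩ := hG.exists_reachable_ssubset hC hpq
    (hdeg p (C.fst_mem_support_of_mem_edges hpq)) hup huq hsep
  exact hmin _ ⟨a, b, w, hab, hwa, hwb, hsep', rfl⟩ hlt

end Separation

end SimpleGraph

open SimpleGraph in
theorem minimally_two_connected_structure {V : Type*} [Fintype V]
    (G : SimpleGraph V) [DecidableRel G.Adj]
    (hmin : G.MinimallyTwoConnected) :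
    G.minDegree = 2 ∧ (G.induce {v : V | 3 ≤ G.degree v}).IsAcyclic := by
  have : Nontrivial V := Fintype.one_lt_card_iff_nontrivial.mp (by have := hmin.1.1; omega)
  refine ⟨le_antisymm ?_ (G.le_minDegree_of_forall_le_degree 2 hmin.1.two_le_degree), ?_⟩
  · by_contra! h3
    have hcyc : ¬ G.IsAcyclic := fun hacyc => by
      have := IsTree.minDegree_eq_one_of_nontrivial ⟨hmin.1.connected, hacyc⟩
      omega
    obtain ⟨v, C, hC⟩ : ∃ v, ∃ C : G.Walk v v, C.IsCycle := by
      simpa [IsAcyclic] using hcyc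
    obtain ⟨x, -, hx⟩ := hmin.exists_degree_lt_three_of_isCycle hC
    have := G.minDegree_le_degree x
    omega
  · intro v C hC
    let f := (Embedding.induce (G := G) {v : V | 3 ≤ G.degree v}).toHom
    obtain ⟨x, hx, hdeg⟩ := hmin.exists_degree_lt_three_of_isCycle
      ((Walk.isCycle_map_iff_of_injective (p := C) (f := f) Subtype.val_injective).mpr hC)
    rw [Walk.support_map, List.mem_map] at hx
    obtain ⟨y, -, rfl⟩ := hx
    exact (not_le.mpr hdeg) y.2
end

section
/- A 2-connected simple graph is chordless if and only if it is minimally 2-connected. -/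
/-- A graph is chordless if every cycle is an induced cycle, i.e. no cycle has
a chord: any edge joining two vertices of a cycle is an edge of that cycle. -/
def SimpleGraph.Chordless {V : Type*} (G : SimpleGraph V) : Prop :=
  ∀ (v : V) (c : G.Walk v v), c.IsCycle →
    ∀ u w, u ∈ c.support → w ∈ c.support → G.Adj u w → s(u, w) ∈ c.edges

/-! If `G - uv` is 2-connected, then `u` and `v` lie on a common cycle of `G - uv`, and `uv` is a
chord of that cycle. The common cycle is built backwards along a walk from `u` to `v`: if `u'` is
adjacent to `w` and a cycle `C` passes through `w` and `v`, a path from `u'` to `v` avoiding `w`,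
followed up to its first vertex on `C`, reroutes `C` through `u'`.
Conversely, if `uw` is a chord of a cycle `C`, then for every vertex `x` one of the two arcs of
`C` between `u` and `w` avoids `x`, so `G - uw - x` is still connected. -/

lemma Fintype.exists_ne_ne_of_three_le_card {V : Type*} [Fintype V] (h : 3 ≤ Fintype.card V)
    (a b : V) : ∃ x, x ≠ a ∧ x ≠ b := by
  classical
  have hcard : ({a, b} : Finset V).card < (Finset.univ : Finset V).card :=
    Finset.card_le_two.trans_lt (by rw [Finset.card_univ]; omega)
  obtain ⟨x, -, hx⟩ := Finset.exists_mem_notMem_of_card_lt_card hcard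
  simp only [Finset.mem_insert, Finset.mem_singleton, not_or] at hx
  exact ⟨x, hx⟩

namespace SimpleGraph

variable {V : Type*} {G : SimpleGraph V}

lemma Connected.of_adj_reachable {H : SimpleGraph V} (hG : G.Connected)
    (h : ∀ ⦃a b⦄, G.Adj a b → H.Reachable a b) : H.Connected := by
  have := hG.nonempty
  refine Connected.mk fun a b => (hG.preconnected a b).elim fun p => ?_
  induction p with
  | nil => rfl
  | cons hadj _ ih => exact (h hadj).trans ih

namespace Walk

lemma exists_isPath_to_first_mem (S : Set V) {a b : V} (p : G.Walk a b) (hb : b ∈ S) :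
    ∃ y ∈ S, ∃ q : G.Walk a y, q.IsPath ∧ q.support ⊆ p.support ∧
      ∀ z ∈ q.support, z ∈ S → z = y := by
  classical
  induction p with
  | nil => exact ⟨_, hb, nil, by simp, by simp, by simp⟩
  | @cons a c b hadj p ih =>
    by_cases ha : a ∈ S
    · exact ⟨a, ha, nil, by simp, by simp, by simp⟩
    obtain ⟨y, hy, q, -, hqp, hqS⟩ := ih hb
    have hsub : (cons hadj q).bypass.support ⊆ a :: q.support := support_bypass_subset_support _
    refine ⟨y, hy, (cons hadj q).bypass, bypass_isPath _, ?_, fun z hz hzS => ?_⟩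
    · exact fun z hz => List.cons_subset_cons a hqp (hsub hz)
    · rcases List.mem_cons.1 (hsub hz) with rfl | hz
      · exact absurd hzS ha
      · exact hqS z hz hzS

lemma IsCycle.disjoint_support_tail_takeUntil_dropUntil [DecidableEq V] {u v : V}
    {c : G.Walk v v} (hc : c.IsCycle) (h : u ∈ c.support) :
    (c.takeUntil u h).support.tail.Disjoint (c.dropUntil u h).support.tail := by
  have hnodup := hc.support_nodup
  rw [← take_spec c h, tail_support_append, List.nodup_append'] at hnodup
  exact hnodup.2.2

lemma IsCycle.exists_isPath_mem_support {v w y : V} {c : G.Walk w w} (hc : c.IsCycle)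
    (hy : y ∈ c.support) (hv : v ∈ c.support) (hyw : y ≠ w) :
    ∃ p : G.Walk y w, p.IsPath ∧ v ∈ p.support ∧ p.support ⊆ c.support := by
  classical
  have hv' : v ∈ (c.takeUntil y hy).support ∨ v ∈ (c.dropUntil y hy).support := by
    rw [← mem_support_append_iff, take_spec]
    exact hv
  rcases hv' with hv | hv
  · refine ⟨(c.takeUntil y hy).reverse, (hc.isPath_takeUntil hy).reverse, by simpa, ?_⟩
    rw [support_reverse]
    exact fun z hz => support_takeUntil_subset_support _ hy (List.mem_reverse.1 hz)
  · have hc' := hc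
    rw [← take_spec c hy] at hc'
    exact ⟨_, hc'.isPath_of_append_right (not_nil_of_ne hyw.symm), hv,
      support_dropUntil_subset_support _ hy⟩

lemma IsCycle.exists_walk_notMem_support {a u w x : V} {c : G.Walk a a} (hc : c.IsCycle)
    (hu : u ∈ c.support) (hw : w ∈ c.support) (hxu : x ≠ u) (hxw : x ≠ w) :
    ∃ p : G.Walk u w, p.edges ⊆ c.edges ∧ x ∉ p.support := by
  classical
  set c' := c.rotate u hu
  have hw' : w ∈ c'.support := (mem_support_rotate_iff ..).2 hw
  have hedges : c'.edges ⊆ c.edges := fun e he => (rotate_edges c u hu).perm.mem_iff.1 he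
  by_cases hxA : x ∈ (c'.takeUntil w hw').support
  · refine ⟨(c'.dropUntil w hw').reverse, ?_, fun hxB => ?_⟩
    · rw [edges_reverse]
      exact fun e he => hedges (edges_dropUntil_subset_edges _ hw' (List.mem_reverse.1 he))
    · rw [support_reverse, List.mem_reverse] at hxB
      exact (hc.rotate hu).disjoint_support_tail_takeUntil_dropUntil hw'
        (((mem_support_iff _).1 hxA).resolve_left hxu)
        (((mem_support_iff _).1 hxB).resolve_left hxw)
  · exact ⟨_, fun e he => hedges (edges_takeUntil_subset_edges _ hw' he), hxA⟩

end Walk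

open Walk

variable [Fintype V]

lemma TwoConnected.preconnected (h : G.TwoConnected) : G.Preconnected := fun a b => by
  obtain ⟨x, hxa, hxb⟩ := Fintype.exists_ne_ne_of_three_le_card h.1 a b
  obtain ⟨p⟩ := (h.2 x).preconnected ⟨a, hxa.symm⟩ ⟨b, hxb.symm⟩
  exact ⟨p.map (Embedding.induce _).toHom⟩

lemma TwoConnected.exists_isPath_notMem_support (h : G.TwoConnected) {a b x : V}
    (ha : a ≠ x) (hb : b ≠ x) : ∃ p : G.Walk a b, p.IsPath ∧ x ∉ p.support := by
  classical
  obtain ⟨p⟩ := (h.2 x).preconnected ⟨a, ha⟩ ⟨b, hb⟩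
  set q := p.map (Embedding.induce _).toHom
  refine ⟨q.bypass, q.bypass_isPath, fun hx => ?_⟩
  have hx' := q.support_bypass_subset_support hx
  rw [Walk.support_map, List.mem_map] at hx'
  obtain ⟨⟨y, hy⟩, -, hyx⟩ := hx'
  exact hy hyx

lemma TwoConnected.exists_isCycle_of_adj (h : G.TwoConnected) {u v : V} (huv : G.Adj u v) :
    ∃ (a : V) (c : G.Walk a a), c.IsCycle ∧ u ∈ c.support ∧ v ∈ c.support := by
  obtain ⟨x, hxu, hxv⟩ := Fintype.exists_ne_ne_of_three_le_card h.1 u v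
  obtain ⟨p, -, hup⟩ := h.exists_isPath_notMem_support huv.ne' hxu
  have hp : ¬p.Nil := not_nil_of_ne hxv.symm
  have hsnd : p.snd ≠ u := fun hsnd => hup (hsnd ▸ p.getVert_mem_support 1)
  obtain ⟨q, hq, hvq⟩ := h.exists_isPath_notMem_support (p.adj_snd hp).ne' huv.ne
  refine ⟨u, huv.toWalk.append (cons (p.adj_snd hp) q), ?_, by simp, by simp⟩
  refine IsPath.isCycle_append (by simpa using huv.ne) ((cons_isPath_iff _ _).2 ⟨hq, hvq⟩)
    (by simpa using hvq) (Or.inr ?_)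
  have : 0 < q.length := not_nil_iff_lt_length.1 (not_nil_of_ne hsnd)
  simp only [length_cons]
  omega

lemma TwoConnected.exists_isCycle_of_adj_of_isCycle (h : G.TwoConnected) {u v w a : V}
    (huw : G.Adj u w) {C : G.Walk a a} (hC : C.IsCycle) (hwC : w ∈ C.support)
    (hvC : v ∈ C.support) (hvw : v ≠ w) :
    ∃ (b : V) (c : G.Walk b b), c.IsCycle ∧ u ∈ c.support ∧ v ∈ c.support := by
  classical
  by_cases huC : u ∈ C.support
  · exact ⟨a, C, hC, huC, hvC⟩
  set C' := C.rotate w hwC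
  have hC' : C'.IsCycle := hC.rotate hwC
  have hmemC' : ∀ z, z ∈ C'.support ↔ z ∈ C.support := fun z => mem_support_rotate_iff ..
  obtain ⟨P, -, hwP⟩ := h.exists_isPath_notMem_support huw.ne hvw
  obtain ⟨y, hyC, Q, hQ, hQP, hQC⟩ :=
    P.exists_isPath_to_first_mem {z | z ∈ C'.support} ((hmemC' v).2 hvC)
  have hyw : y ≠ w := by
    rintro rfl
    exact hwP (hQP Q.end_mem_support)
  obtain ⟨R, hR, hvR, hRC⟩ := hC'.exists_isPath_mem_support hyC ((hmemC' v).2 hvC) hyw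
  -- `w → u`, along `P` to its first vertex `y` on `C`, then along `C` through `v` back to `w`
  refine ⟨w, (cons huw.symm Q).append R, ?_, by simp, by simp [hvR]⟩
  refine IsPath.isCycle_append ((cons_isPath_iff _ _).2 ⟨hQ, fun hw => hwP (hQP hw)⟩) hR
    (fun z hzQ hzR => ?_) (Or.inl ?_)
  · have hzy : z = y := hQC z hzQ (hRC (List.mem_of_mem_tail hzR))
    subst hzy
    have hnodup := hR.support_nodup
    rw [← R.cons_tail_support, List.nodup_cons] at hnodup
    exact hnodup.1 hzR
  · have huy : u ≠ y := fun huy => huC ((hmemC' u).1 (huy ▸ hyC))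
    have : 0 < Q.length := not_nil_iff_lt_length.1 (not_nil_of_ne huy)
    simp only [length_cons]
    omega

lemma TwoConnected.exists_isCycle_mem_support (h : G.TwoConnected) {u v : V} (huv : u ≠ v) :
    ∃ (a : V) (c : G.Walk a a), c.IsCycle ∧ u ∈ c.support ∧ v ∈ c.support := by
  obtain ⟨p⟩ := h.preconnected u v
  induction p with
  | nil => exact absurd rfl huv
  | @cons u w v huw q ih =>
    by_cases hwv : w = v
    · subst hwv
      exact h.exists_isCycle_of_adj huw
    · obtain ⟨a, C, hC, hwC, hvC⟩ := ih hwv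
      exact h.exists_isCycle_of_adj_of_isCycle huw hC hwC hvC (Ne.symm hwv)

lemma Chordless.not_twoConnected_deleteEdges (hG : G.Chordless) {e : Sym2 V}
    (he : e ∈ G.edgeSet) : ¬(G.deleteEdges {e}).TwoConnected := by
  induction e using Sym2.ind with | _ u v => ?_
  intro h
  obtain ⟨a, c, hc, hu, hv⟩ := h.exists_isCycle_mem_support (G.ne_of_adj he)
  have hle := G.deleteEdges_le {s(u, v)}
  have hmem := hG a (c.mapLe hle) (hc.mapLe hle) u v (by simpa) (by simpa) he
  rw [edges_mapLe_eq_edges] at hmem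
  simpa using c.edges_subset_edgeSet hmem

lemma TwoConnected.deleteEdges_chord (h : G.TwoConnected) {a u w : V} {c : G.Walk a a}
    (hc : c.IsCycle) (hu : u ∈ c.support) (hw : w ∈ c.support) (hchord : s(u, w) ∉ c.edges) :
    (G.deleteEdges {s(u, w)}).TwoConnected := by
  refine ⟨h.1, fun x => (h.2 x).of_adj_reachable ?_⟩
  rintro ⟨p, hpx⟩ ⟨r, hrx⟩ hpr
  by_cases hpr_chord : s(p, r) = s(u, w)
  · have hpr_c : p ∈ c.support ∧ r ∈ c.support := by
      rcases Sym2.eq_iff.1 hpr_chord with ⟨rfl, rfl⟩ | ⟨rfl, rfl⟩ <;> simp [*]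
    obtain ⟨A, hAc, hxA⟩ :=
      hc.exists_walk_notMem_support hpr_c.1 hpr_c.2 (Ne.symm hpx) (Ne.symm hrx)
    have hA : ∀ e ∈ A.edges, e ∉ ({s(u, w)} : Set (Sym2 V)) := by
      rintro e he rfl
      exact hchord (hAc he)
    exact ⟨(A.toDeleteEdges _ hA).induce {y | y ≠ x} fun y hy hyx =>
      hxA (hyx ▸ by simpa using hy)⟩
  · exact Adj.reachable (by simpa [hpr_chord] using hpr)

lemma MinimallyTwoConnected.chordless (h : G.MinimallyTwoConnected) : G.Chordless := by
  intro a c hc u w hu hw huw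
  by_contra hchord
  exact h.2 _ huw (h.1.deleteEdges_chord hc hu hw hchord)

end SimpleGraph

theorem chordless_iff_minimally_two_connected {V : Type*} [Fintype V]
    (G : SimpleGraph V) (h2 : G.TwoConnected) :
    G.Chordless ↔ G.MinimallyTwoConnected :=
  ⟨fun hG => ⟨h2, fun _ he => hG.not_twoConnected_deleteEdges he⟩,
    SimpleGraph.MinimallyTwoConnected.chordless⟩
end

section
/- Every chordless simple graph is 2-degenerate. -/
/-!
Take a longest path `p` inside `S`, starting at `a`. By maximality every neighbour of `a` in `S`
lies on `p`. At most one of them, the second vertex of `p`, is joined to `a` by an edge of `p`.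
If two others `u` and `w` existed, with `w` before `u` on `p`, then the segment of `p` from `a`
to `u` closed by the edge `ua` would be a cycle with the chord `aw`. Hence `a` has at most two
neighbours in `S`.
-/

namespace SimpleGraph

variable {V : Type*} {G : SimpleGraph V}

theorem Walk.mem_support_takeUntil_or [DecidableEq V] {v x u w : V} (p : G.Walk v x)
    (hu : u ∈ p.support) (hw : w ∈ p.support) :
    w ∈ (p.takeUntil u hu).support ∨ u ∈ (p.takeUntil w hw).support := by
  rcases List.prefix_or_prefix_of_prefix (p.support_takeUntil_prefix_support hw)
    (p.support_takeUntil_prefix_support hu) with h | h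
  · exact .inl (h.subset (end_mem_support _))
  · exact .inr (h.subset (end_mem_support _))

theorem Chordless.eq_of_adj_of_mk_notMem_edges [DecidableEq V] (hc : G.Chordless)
    {a b u w : V} {p : G.Walk a b} (hp : p.IsPath) (hu : u ∈ p.support) (hw : w ∈ p.support)
    (hau : G.Adj a u) (haw : G.Adj a w) (hu' : s(a, u) ∉ p.edges) (hw' : s(a, w) ∉ p.edges) :
    u = w := by
  wlog hwu : w ∈ (p.takeUntil u hu).support generalizing u w
  · have huw := (p.mem_support_takeUntil_or hu hw).resolve_left hwu
    exact (this hw hu haw hau hw' hu' huw).symm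
  set q := p.takeUntil u hu
  have hcycle : (Walk.cons hau.symm q).IsCycle := by
    refine (Walk.cons_isCycle_iff q hau.symm).2 ⟨hp.takeUntil hu, fun h ↦ hu' ?_⟩
    exact p.edges_takeUntil_subset_edges hu (Sym2.eq_swap ▸ h)
  have hchord := hc u _ hcycle a w (List.mem_cons_of_mem _ q.start_mem_support)
    (List.mem_cons_of_mem _ hwu) haw
  rw [Walk.edges_cons, List.mem_cons] at hchord
  rcases hchord with h | h
  · rcases Sym2.eq_iff.mp h with ⟨hau', -⟩ | ⟨-, hwu'⟩
    · exact absurd hau' hau.ne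
    · exact hwu'.symm
  · exact absurd (p.edges_takeUntil_subset_edges hu h) hw'

theorem exists_isPath_forall_adj_mem_support [Finite V] {S : Set V} (hS : S.Nonempty) :
    ∃ (a b : V) (p : G.Walk a b), p.IsPath ∧ (∀ x ∈ p.support, x ∈ S) ∧
      ∀ w ∈ S, G.Adj a w → w ∈ p.support := by
  cases nonempty_fintype V
  by_contra! hextend
  have hlong : ∀ n, ∃ (a b : V) (p : G.Walk a b), p.IsPath ∧ (∀ x ∈ p.support, x ∈ S) ∧
      p.length = n := by
    intro n
    induction n with
    | zero =>
      obtain ⟨v, hv⟩ := hS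
      exact ⟨v, v, .nil, .nil, by simpa, rfl⟩
    | succ n ih =>
      obtain ⟨a, b, p, hp, hpS, rfl⟩ := ih
      obtain ⟨w, hwS, haw, hwp⟩ := hextend a b p hp hpS
      refine ⟨w, b, .cons haw.symm p, hp.cons hwp, ?_, rfl⟩
      simpa only [Walk.support_cons, List.mem_cons, forall_eq_or_imp] using ⟨hwS, hpS⟩
  obtain ⟨a, b, p, hp, -, hlen⟩ := hlong (Fintype.card V)
  exact hp.length_lt.ne hlen

end SimpleGraph

open SimpleGraph

theorem chordless_two_degenerate {V : Type*} [Fintype V]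
    (G : SimpleGraph V) [DecidableRel G.Adj]
    (hc : G.Chordless) : G.Degenerate 2 := by
  classical
  intro S hS
  obtain ⟨a, b, p, hp, hpS, hN⟩ := exists_isPath_forall_adj_mem_support (G := G)
    (Finset.coe_nonempty.2 hS)
  refine ⟨a, hpS a p.start_mem_support, ?_⟩
  rw [← Finset.card_filter_add_card_filter_not (fun w ↦ s(a, w) ∈ p.edges)]
  have hpath_edge : ((S.filter (G.Adj a)).filter fun w ↦ s(a, w) ∈ p.edges).card ≤ 1 := by
    refine Finset.card_le_one.2 fun u hu w hw ↦ ?_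
    rw [hp.eq_snd_of_mem_edges (Finset.mem_filter.1 hu).2,
      hp.eq_snd_of_mem_edges (Finset.mem_filter.1 hw).2]
  have hchord : ((S.filter (G.Adj a)).filter fun w ↦ s(a, w) ∉ p.edges).card ≤ 1 := by
    refine Finset.card_le_one.2 fun u hu w hw ↦ ?_
    simp only [Finset.mem_filter] at hu hw
    exact hc.eq_of_adj_of_mk_notMem_edges hp (hN u hu.1.1 hu.1.2) (hN w hw.1.1 hw.1.2)
      hu.1.2 hw.1.2 hu.2 hw.2
  omega
end

section
/- If G is a k-degenerate simple graph with maximum degree Δ, k ≤ Δ, and each edge e of G is assigned a list L(e) of colors with |L(e)| ≥ (4k − 2)·Δ − 2k² + 1, then G admits a strong edge coloring in which every edge e receives a color from its own list L(e). -/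
open Finset Function

theorem exists_list_coloring_of_card_filter_lt {α β γ : Type*} [DecidableEq α]
    [LinearOrder β] [DecidableEq γ] [Nonempty γ] (R : α → α → Prop) [DecidableRel R]
    (hR : ∀ a b, R a b → R b a) (w : α → β) (hw : Injective w) (L : α → Finset γ)
    (E : Finset α) (hL : ∀ e ∈ E, #{f ∈ E | R e f ∧ w f < w e} < #(L e)) :
    ∃ C : α → γ, (∀ e ∈ E, C e ∈ L e) ∧
      ∀ e ∈ E, ∀ f ∈ E, e ≠ f → R e f → C e ≠ C f := by
  induction E using Finset.induction_on_max_value w with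
  | empty => exact ⟨fun _ => Classical.arbitrary γ, by simp, by simp⟩
  | insert a s has hmax ih =>
    obtain ⟨C, hCL, hC⟩ := ih fun e he =>
      (card_le_card (filter_subset_filter _ (subset_insert a s))).trans_lt
        (hL e (mem_insert_of_mem he))
    have hne : ∀ f ∈ s, f ≠ a := fun f hf => ne_of_mem_of_not_mem hf has
    have hused : #({f ∈ s | R a f}.image C) < #(L a) := by
      refine card_image_le.trans_lt ((card_le_card fun f hf => ?_).trans_lt
        (hL a (mem_insert_self a s)))
      obtain ⟨hfs, hRf⟩ := mem_filter.1 hf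
      exact mem_filter.2 ⟨mem_insert_of_mem hfs, hRf,
        (hmax f hfs).lt_of_ne (hw.ne (hne f hfs))⟩
    obtain ⟨c, hcL, hcC⟩ := exists_mem_notMem_of_card_lt_card hused
    have hfresh : ∀ f ∈ s, R a f → c ≠ C f := fun f hf hRf h =>
      hcC (mem_image.2 ⟨f, mem_filter.2 ⟨hf, hRf⟩, h.symm⟩)
    refine ⟨update C a c, fun e he => ?_, fun e he f hf hef hRef => ?_⟩
    · rcases mem_insert.1 he with rfl | he
      · simpa using hcL
      · simpa [hne e he] using hCL e he
    · rcases mem_insert.1 he with rfl | he' <;> rcases mem_insert.1 hf with rfl | hf'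
      · exact absurd rfl hef
      · simpa [hne f hf'] using hfresh f hf' hRef
      · simpa [hne e he'] using (hfresh e he' (hR _ _ hRef)).symm
      · simpa [hne e he', hne f hf'] using hC e he' f hf' hef hRef

namespace SimpleGraph

variable {V : Type*} [Fintype V] [DecidableEq V] {G : SimpleGraph V} [DecidableRel G.Adj] {k : ℕ}

theorem Degenerate.exists_injOn_forall_card_lt_le (hG : G.Degenerate k) (S : Finset V) :
    ∃ idx : V → ℕ, Set.InjOn idx S ∧
      ∀ x ∈ S, #{y ∈ S | G.Adj x y ∧ idx y < idx x} ≤ k := by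
  induction S using Finset.eraseInduction with | _ S ih
  obtain rfl | hS := S.eq_empty_or_nonempty
  · exact ⟨fun _ => 0, by simp, by simp⟩
  obtain ⟨v, hvS, hv⟩ := hG S hS
  obtain ⟨idx, hinj, hidx⟩ := ih v hvS
  -- `v` is placed after every other vertex of `S`
  set m := (S.erase v).sup idx + 1
  have hlt : ∀ x ∈ S, x ≠ v → idx x < m := fun x hx hxv =>
    Nat.lt_succ_of_le (le_sup (mem_erase.2 ⟨hxv, hx⟩))
  refine ⟨update idx v m, fun x hx y hy hxy => ?_, fun x hx => ?_⟩
  · by_cases hxv : x = v <;> by_cases hyv : y = v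
    · rw [hxv, hyv]
    · simp only [hxv, update_self, update_of_ne hyv] at hxy
      exact absurd hxy (hlt y hy hyv).ne'
    · simp only [hyv, update_self, update_of_ne hxv] at hxy
      exact absurd hxy (hlt x hx hxv).ne
    · simp only [update_of_ne hxv, update_of_ne hyv] at hxy
      exact hinj (mem_erase.2 ⟨hxv, hx⟩) (mem_erase.2 ⟨hyv, hy⟩) hxy
  by_cases hxv : x = v
  · subst hxv
    exact (card_le_card (monotone_filter_right _ fun y _ hy => hy.1)).trans hv
  refine (card_le_card fun y hy => ?_).trans (hidx x (mem_erase.2 ⟨hxv, hx⟩))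
  simp only [mem_filter, update_of_ne hxv] at hy ⊢
  obtain ⟨hyS, hadj, hyx⟩ := hy
  have hyv : y ≠ v := by
    rintro rfl
    simp only [update_self] at hyx
    exact (hlt x hx hxv).not_gt hyx
  rw [update_of_ne hyv] at hyx
  exact ⟨mem_erase.2 ⟨hyv, hyS⟩, hadj, hyx⟩

theorem Degenerate.exists_injective_forall_card_lt_le (hG : G.Degenerate k) :
    ∃ idx : V → ℕ, Injective idx ∧
      ∀ x, #{y ∈ G.neighborFinset x | idx y < idx x} ≤ k := by
  obtain ⟨idx, hinj, hidx⟩ := hG.exists_injOn_forall_card_lt_le univ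
  exact ⟨idx, fun x y h => hinj (mem_univ x) (mem_univ y) h, fun x => by
    simpa [neighborFinset_eq_filter, filter_filter] using hidx x (mem_univ x)⟩

end SimpleGraph

namespace Sym2

variable {V : Type*} [LinearOrder V]

def lexKey (e : Sym2 V) : V ×ₗ V := toLex (e.inf, e.sup)

theorem lexKey_injective : Injective (lexKey : Sym2 V → V ×ₗ V) := fun _ _ h =>
  inf_eq_inf_and_sup_eq_sup.1 (Prod.ext_iff.1 (toLex.injective h))

theorem lexKey_mk_of_le {a b : V} (h : a ≤ b) : s(a, b).lexKey = toLex (a, b) := by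
  simp [lexKey, h]

end Sym2

namespace Finset

section Sym2

variable {V : Type*} [DecidableEq V]

def sym2Sigma (s : Finset V) (t : V → Finset V) : Finset (Sym2 V) :=
  (s.sigma t).image fun p => s(p.1, p.2)

theorem mk_mem_sym2Sigma {s : Finset V} {t : V → Finset V} {x y : V} (hx : x ∈ s)
    (hy : y ∈ t x) : s(x, y) ∈ s.sym2Sigma t :=
  mem_image.2 ⟨⟨x, y⟩, mem_sigma.2 ⟨hx, hy⟩, rfl⟩

theorem card_sym2Sigma_le_mul {s : Finset V} {t : V → Finset V} {m : ℕ}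
    (h : ∀ x ∈ s, #(t x) ≤ m) : #(s.sym2Sigma t) ≤ #s * m :=
  card_image_le.trans ((card_sigma s t).trans_le (by simpa using sum_le_card_nsmul s _ m h))

end Sym2

section LinearOrder

variable {α : Type*} [LinearOrder α]

theorem card_filter_lt_add_card_filter_gt_le (s : Finset α) (a : α) :
    #{x ∈ s | x < a} + #{x ∈ s | a < x} ≤ #s := by
  rw [← card_union_of_disjoint (disjoint_filter.2 fun _ _ h₁ h₂ => lt_asymm h₁ h₂)]
  exact card_le_card (union_subset (filter_subset _ _) (filter_subset _ _))

variable {s : Finset α} {a b c : α}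

theorem card_filter_lt_add_card_filter_between_lt (ha : a ∈ s) (hab : a < b) :
    #{x ∈ s | x < a} + #{x ∈ s | a < x ∧ x < b} < #{x ∈ s | x < b} := by
  rw [← card_union_of_disjoint (disjoint_filter.2 fun _ _ h₁ h₂ => lt_asymm h₁ h₂.1)]
  refine card_lt_card ⟨fun x hx => ?_, fun h => by simpa using h (mem_filter.2 ⟨ha, hab⟩)⟩
  simp only [mem_union, mem_filter] at hx ⊢
  rcases hx with hx | hx
  exacts [⟨hx.1, hx.2.trans hab⟩, ⟨hx.1, hx.2.2⟩]

theorem card_filter_lt_lt_card_filter_lt (hb : b ∈ s) (hab : a ≤ b) (hbc : b < c) :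
    #{x ∈ s | x < a} < #{x ∈ s | x < c} := by
  exact card_lt_card ⟨monotone_filter_right _ fun x _ hx => hx.trans (hab.trans_lt hbc),
    fun h => hab.not_gt (mem_filter.1 (h (mem_filter.2 ⟨hb, hbc⟩))).2⟩

end LinearOrder

end Finset

namespace SimpleGraph

variable {V : Type*}

section StrongConflict

variable (G : SimpleGraph V)

/-- The relation that `IsStrongEdgeColoring` requires distinct colours on. -/
def StrongConflict (e f : Sym2 V) : Prop :=
  (∃ v, v ∈ e ∧ v ∈ f) ∨
    ∃ g ∈ G.edgeSet, (∃ v, v ∈ e ∧ v ∈ g) ∧ ∃ w, w ∈ g ∧ w ∈ f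

variable {G}

theorem StrongConflict.symm {e f : Sym2 V} : G.StrongConflict e f → G.StrongConflict f e
  | .inl ⟨v, hve, hvf⟩ => .inl ⟨v, hvf, hve⟩
  | .inr ⟨g, hg, ⟨v, hve, hvg⟩, w, hwg, hwf⟩ =>
    .inr ⟨g, hg, ⟨w, hwf, hwg⟩, v, hvg, hve⟩

theorem StrongConflict.exists_adj {e f : Sym2 V} (h : G.StrongConflict e f)
    (hef : ∀ v ∈ e, v ∉ f) : ∃ v ∈ e, ∃ w ∈ f, G.Adj v w := by
  rcases h with ⟨v, hve, hvf⟩ | ⟨g, hg, ⟨v, hve, hvg⟩, w, hwg, hwf⟩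
  · exact absurd hvf (hef v hve)
  · have hvw : v ≠ w := fun h => hef v hve (h ▸ hwf)
    rw [(Sym2.mem_and_mem_iff hvw).1 ⟨hvg, hwg⟩, mem_edgeSet] at hg
    exact ⟨v, hve, w, hwf, hg⟩

theorem exists_lt_adj_eq_mk_of_mem_edgeSet [LinearOrder V] {e : Sym2 V} (he : e ∈ G.edgeSet) :
    ∃ v u, v < u ∧ G.Adj v u ∧ e = s(v, u) := by
  induction e with | _ a b
  rcases lt_trichotomy a b with h | rfl | h
  · exact ⟨a, b, h, he, rfl⟩
  · exact absurd he G.irrefl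
  · exact ⟨b, a, h, he.symm, Sym2.eq_swap⟩

end StrongConflict

theorem card_neighborFinset_sdiff_le_maxDegree_sub_one [Fintype V] [DecidableEq V]
    {G : SimpleGraph V} [DecidableRel G.Adj] {x : V} {s : Finset V}
    (hs : ∃ w ∈ s, G.Adj x w) : #(G.neighborFinset x \ s) ≤ G.maxDegree - 1 := by
  obtain ⟨w, hws, hxw⟩ := hs
  refine Nat.le_sub_one_of_lt ((card_lt_card ⟨sdiff_subset, fun h => ?_⟩).trans_le
    (by simpa using G.degree_le_maxDegree x))
  exact (mem_sdiff.1 (h ((mem_neighborFinset _ _ _).2 hxw))).2 hws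

variable [Fintype V] [LinearOrder V] (G : SimpleGraph V) [DecidableRel G.Adj]

/-- For `v < u`, contains every edge that conflicts with `s(v, u)` and precedes it in `lexKey`
order, written as `s(x, y)` with `x` the endpoint the edge is charged to. -/
def earlierConflictCover (v u : V) : Finset (Sym2 V) :=
  ({u} : Finset V).sym2Sigma (fun x => {y ∈ G.neighborFinset x | y < v}) ∪
    ({v} : Finset V).sym2Sigma (fun _ => G.neighborFinset v \ {u}) ∪
    ({y ∈ G.neighborFinset u | y < v} ∪ {y ∈ G.neighborFinset v | y < v}).sym2Sigma
      (fun x => G.neighborFinset x \ {u, v}) ∪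
    {x ∈ G.neighborFinset u | v < x ∧ x < u}.sym2Sigma
      (fun x => {y ∈ G.neighborFinset x | y < v}) ∪
    {x ∈ G.neighborFinset u | u < x}.sym2Sigma (fun x => {y ∈ G.neighborFinset x | y < v}) ∪
    ({x ∈ G.neighborFinset v | v < x}.erase u).sym2Sigma
      (fun x => {y ∈ G.neighborFinset x | y < v})

variable {G}

theorem mk_mem_earlierConflictCover_of_adj {v u y x z : V} (hvu : v < u) (hyv : y < v)
    (hadj : G.Adj y x) (hxv : x ≠ v) (hxu : x ≠ u) (hz : z = y ∨ z = x)
    (hz_adj : G.Adj v z ∨ G.Adj u z) : s(y, x) ∈ G.earlierConflictCover v u := by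
  have hyu : y ≠ u := (hyv.trans hvu).ne
  simp only [earlierConflictCover, mem_union]
  obtain hz | hz := hz
  · subst z
    left; left; left; right
    exact mk_mem_sym2Sigma (by simp only [mem_union, mem_filter, mem_neighborFinset]; tauto)
      (by simp [hadj, hxu, hxv])
  subst z
  rw [Sym2.eq_swap]
  rcases lt_or_gt_of_ne hxv with hxv | hxv
  · left; left; left; right
    exact mk_mem_sym2Sigma (by simp only [mem_union, mem_filter, mem_neighborFinset]; tauto)
      (by simp [hadj.symm, hyu, hyv.ne])
  have hy : y ∈ {y ∈ G.neighborFinset x | y < v} := by simp [hadj.symm, hyv]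
  rcases hz_adj with hvx | hux
  · right
    exact mk_mem_sym2Sigma (by simp [hxu, hvx, hxv]) hy
  rcases lt_or_gt_of_ne hxu with hxu | hxu
  · left; left; right
    exact mk_mem_sym2Sigma (by simp [hux, hxv, hxu]) hy
  · left; right
    exact mk_mem_sym2Sigma (by simp [hux, hxu]) hy

theorem mem_earlierConflictCover {v u : V} (hvu : v < u) {f : Sym2 V} (hf : f ∈ G.edgeSet)
    (hconf : G.StrongConflict s(v, u) f) (hlt : f.lexKey < s(v, u).lexKey) :
    f ∈ G.earlierConflictCover v u := by
  obtain ⟨y, x, hyx, hadj, rfl⟩ := exists_lt_adj_eq_mk_of_mem_edgeSet hf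
  rw [Sym2.lexKey_mk_of_le hyx.le, Sym2.lexKey_mk_of_le hvu.le, Prod.Lex.toLex_lt_toLex] at hlt
  by_cases hxu : x = u
  · subst hxu
    have hyv : y < v := by
      rcases hlt with h | ⟨-, h⟩
      exacts [h, absurd h (lt_irrefl _)]
    simp only [earlierConflictCover, mem_union]
    left; left; left; left; left
    rw [Sym2.eq_swap]
    exact mk_mem_sym2Sigma (mem_singleton_self _) (by simp [hadj.symm, hyv])
  by_cases hv : y = v ∨ x = v
  · simp only [earlierConflictCover, mem_union]
    left; left; left; left; right
    rcases hv with rfl | rfl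
    · exact mk_mem_sym2Sigma (mem_singleton_self _) (by simp [hxu, hadj])
    · rw [Sym2.eq_swap]
      exact mk_mem_sym2Sigma (mem_singleton_self _)
        (by simp [(hyx.trans hvu).ne, hadj.symm])
  push Not at hv
  have hyv : y < v := by
    rcases hlt with h | ⟨h, -⟩
    exacts [h, absurd h hv.1]
  obtain ⟨w, hw, z, hz, hwz⟩ := hconf.exists_adj
    (by simp [hv.1.symm, hv.2.symm, (hyv.trans hvu).ne', Ne.symm hxu])
  refine mk_mem_earlierConflictCover_of_adj hvu hyv hadj hv.2 hxu (Sym2.mem_iff.1 hz) ?_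
  rcases Sym2.mem_iff.1 hw with rfl | rfl <;> simp [hwz]

end SimpleGraph

/-- The count behind `card_earlierConflictCover_add_le`: `a`, `b`, `c` are the numbers of
neighbours of `u` below `v`, between `v` and `u`, and above `u`; `q` and `d + 1` those of `v`
below and above `v`; `l` is the number of neighbours of `u` or `v` below `v`. -/
theorem earlierConflict_count_le {a b c q d l k Δ : ℕ} (hl : l ≤ a + q) (hab : a + b + 1 ≤ k)
    (habc : a + b + 1 + c ≤ Δ) (hq : q ≤ k) (hqd : q + d + 1 ≤ Δ) (hk : k ≤ Δ) :
    a + (Δ - 1) + l * (Δ - 1) + b * k + c * (k - 1) + d * (k - 1) + 2 * k ^ 2 ≤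
      (4 * k - 2) * Δ := by
  obtain ⟨k, rfl⟩ : ∃ k', k = k' + 1 := ⟨k - 1, by omega⟩
  obtain ⟨Δ, rfl⟩ : ∃ Δ', Δ = Δ' + 1 := ⟨Δ - 1, by omega⟩
  simp only [Nat.add_sub_cancel, show 4 * (k + 1) - 2 = 4 * k + 2 by omega]
  nlinarith [Nat.mul_le_mul_right Δ hl, Nat.mul_le_mul_right k (show c ≤ Δ - a - b by omega),
    Nat.mul_le_mul_right k (show d ≤ Δ - q by omega)]

namespace SimpleGraph

variable {V : Type*} [Fintype V] [LinearOrder V] {G : SimpleGraph V} [DecidableRel G.Adj]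

theorem card_earlierConflictCover_add_le {k : ℕ}
    (hback : ∀ x, #{y ∈ G.neighborFinset x | y < x} ≤ k) (hk : k ≤ G.maxDegree) {v u : V}
    (hvu : v < u) (hadj : G.Adj v u) :
    #(G.earlierConflictCover v u) + 2 * k ^ 2 ≤ (4 * k - 2) * G.maxDegree := by
  have hlower (x : V) (hx : v < x) : #{y ∈ G.neighborFinset x | y < v} ≤ k :=
    (card_le_card (monotone_filter_right _ fun y _ hy => hy.trans hx)).trans (hback x)
  have hlower_of_adj (x w : V) (hxw : G.Adj w x) (hvw : v ≤ w) (hwx : w < x) :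
      #{y ∈ G.neighborFinset x | y < v} ≤ k - 1 :=
    Nat.le_sub_one_of_lt ((card_filter_lt_lt_card_filter_lt
      ((mem_neighborFinset _ _ _).2 hxw.symm) hvw hwx).trans_le (hback x))
  have hu_low := card_filter_lt_add_card_filter_between_lt
    ((mem_neighborFinset G u v).2 hadj.symm) hvu
  have hu_deg := card_filter_lt_add_card_filter_gt_le (G.neighborFinset u) u
  have hv_deg := card_filter_lt_add_card_filter_gt_le (G.neighborFinset v) v
  have hv_up := card_erase_add_one
    (show u ∈ {x ∈ G.neighborFinset v | v < x} by simp [hadj, hvu])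
  have hdeg_u : #(G.neighborFinset u) ≤ G.maxDegree := by simpa using G.degree_le_maxDegree u
  have hdeg_v : #(G.neighborFinset v) ≤ G.maxDegree := by simpa using G.degree_le_maxDegree v
  rw [earlierConflictCover]
  grw [card_union_le, card_union_le, card_union_le, card_union_le, card_union_le,
    card_sym2Sigma_le_mul (m := #{y ∈ G.neighborFinset u | y < v}) (by simp),
    card_sym2Sigma_le_mul (m := G.maxDegree - 1) fun _ _ =>
      card_neighborFinset_sdiff_le_maxDegree_sub_one ⟨u, by simp, hadj⟩,
    card_sym2Sigma_le_mul fun x hx => card_neighborFinset_sdiff_le_maxDegree_sub_one (by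
      simp only [mem_union, mem_filter, mem_neighborFinset] at hx
      rcases hx with hx | hx
      exacts [⟨u, by simp, hx.1.symm⟩, ⟨v, by simp, hx.1.symm⟩]),
    card_sym2Sigma_le_mul fun x hx => hlower x (mem_filter.1 hx).2.1,
    card_sym2Sigma_le_mul (s := {x ∈ G.neighborFinset u | u < x}) fun x hx => by
      obtain ⟨hux, hxu⟩ := mem_filter.1 hx
      exact hlower_of_adj x u ((mem_neighborFinset _ _ _).1 hux) hvu.le hxu,
    card_sym2Sigma_le_mul fun x hx => by
      obtain ⟨hvx, hxv⟩ := mem_filter.1 (mem_of_mem_erase hx)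
      exact hlower_of_adj x v ((mem_neighborFinset _ _ _).1 hvx) le_rfl hxv]
  rw [card_singleton, card_singleton, one_mul, one_mul]
  exact earlierConflict_count_le (card_union_le _ _) (by have := hback u; omega) (by omega)
    (hback v) (by omega) hk

end SimpleGraph

open SimpleGraph

theorem list_strong_edge_coloring_of_degenerate {V : Type*} [Fintype V]
    (G : SimpleGraph V) [DecidableRel G.Adj] (k : ℕ)
    (hdeg : G.Degenerate k) (hk : k ≤ G.maxDegree)
    (L : Sym2 V → Finset ℕ)
    (hL : ∀ e ∈ G.edgeSet, (4 * k - 2) * G.maxDegree - 2 * k ^ 2 + 1 ≤ (L e).card) :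
    ∃ C : Sym2 V → ℕ, (∀ e ∈ G.edgeSet, C e ∈ L e) ∧
      G.IsStrongEdgeColoring C := by
  classical
  obtain ⟨idx, hidx, hback⟩ := hdeg.exists_injective_forall_card_lt_le
  let _ : LinearOrder V := LinearOrder.lift' idx hidx
  obtain ⟨C, hCL, hC⟩ := exists_list_coloring_of_card_filter_lt G.StrongConflict
    (fun _ _ => StrongConflict.symm) Sym2.lexKey Sym2.lexKey_injective L G.edgeFinset
    fun e he => by
      obtain ⟨v, u, hvu, hadj, rfl⟩ := exists_lt_adj_eq_mk_of_mem_edgeSet (mem_edgeFinset.1 he)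
      have hcover : {f ∈ G.edgeFinset | G.StrongConflict s(v, u) f ∧ f.lexKey < s(v, u).lexKey}
          ⊆ G.earlierConflictCover v u := fun f hf => by
        obtain ⟨hfE, hconf, hlt⟩ := mem_filter.1 hf
        exact mem_earlierConflictCover hvu (mem_edgeFinset.1 hfE) hconf hlt
      have := card_le_card hcover
      have := card_earlierConflictCover_add_le hback hk hvu hadj
      have := hL _ (mem_edgeFinset.1 he)
      omega
  exact ⟨C, fun e he => hCL e (mem_edgeFinset.2 he),
    fun e he f hf => hC e (mem_edgeFinset.2 he) f (mem_edgeFinset.2 hf)⟩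
end
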